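/- arXiv:2308.02755 — 3 statements merged into one kernel-verified Lean document; each statement's English description precedes it below -/
import Mathlib

section
/- Let A_a and A_o be real symmetric square matrices, each switching isomorphic to an entrywise nonnegative irreducible matrix (Class II). (a) If the spectra of both A_a and A_o are symmetric about the origin (λ ∈ σ(A) iff −λ ∈ σ(A) with equal multiplicity, equivalently the characteristic polynomial p satisfies p(−x) = (−1)ⁿ p(x)), then the set Λ₂ := {(λ,μ) ∈ σ(A_a)×σ(A_o) : λμ = max over σ(A_a)×σ(A_o) of λ'μ'} equals {(ρ(A_a), ρ(A_o)), (−ρ(A_a), −ρ(A_o))}. (b) If the spectrum of at least one of A_a, A_o is not symmetric about the origin, then Λ₂ equals the singleton {(ρ(A_a), ρ(A_o))}, which coincides with Λ₁ := {(λ,μ) : λ = max σ(A_a), μ = max σ(A_o)}. -/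
open Matrix Polynomial

/-- The spectrum of a real square matrix: the multiset of complex roots of its
characteristic polynomial. -/
noncomputable def spectrumM {m : Type*} [Fintype m] [DecidableEq m]
    (A : Matrix m m ℝ) : Multiset ℂ :=
  ((A.map Complex.ofReal).charpoly).roots

/-- The spectral radius: the maximum modulus of the eigenvalues. -/
noncomputable def specRadius {m : Type*} [Fintype m] [DecidableEq m]
    (A : Matrix m m ℝ) : ℝ :=
  sSup {r : ℝ | ∃ z ∈ spectrumM A, ‖z‖ = r}

/-- A switching matrix: diagonal with ±1 entries. -/
def IsSwitching {n : ℕ} (Θ : Matrix (Fin n) (Fin n) ℝ) : Prop :=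
  ∃ θ : Fin n → ℝ, (∀ i, θ i = 1 ∨ θ i = -1) ∧ Θ = Matrix.diagonal θ

/-- A permutation matrix. -/
def IsPermMatrix {n : ℕ} (P : Matrix (Fin n) (Fin n) ℝ) : Prop :=
  ∃ σ : Equiv.Perm (Fin n), P = Matrix.of fun i j => if σ j = i then 1 else 0

/-- Eventually positive matrix: all entries of all high enough powers are positive. -/
def EventuallyPositive {n : ℕ} (B : Matrix (Fin n) (Fin n) ℝ) : Prop :=
  ∃ k₀ : ℕ, ∀ k : ℕ, k₀ ≤ k → ∀ i j, 0 < (B ^ k) i j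

/-- Entrywise nonnegative and irreducible matrix. -/
def IrreducibleNonneg {n : ℕ} (B : Matrix (Fin n) (Fin n) ℝ) : Prop :=
  (∀ i j, 0 ≤ B i j) ∧ ∀ i j, ∃ k : ℕ, 0 < k ∧ 0 < (B ^ k) i j

/-- Class I: switching isomorphic to an eventually positive matrix. -/
def ClassI {n : ℕ} (A : Matrix (Fin n) (Fin n) ℝ) : Prop :=
  ∃ Θ P : Matrix (Fin n) (Fin n) ℝ, IsSwitching Θ ∧ IsPermMatrix P ∧
    EventuallyPositive (Θ * P * A * Pᵀ * Θ)

/-- Class II: switching isomorphic to an entrywise nonnegative irreducible matrix. -/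
def ClassII {n : ℕ} (A : Matrix (Fin n) (Fin n) ℝ) : Prop :=
  ∃ Θ P : Matrix (Fin n) (Fin n) ℝ, IsSwitching Θ ∧ IsPermMatrix P ∧
    IrreducibleNonneg (Θ * P * A * Pᵀ * Θ)

/-- The maximal real part of the eigenvalues. -/
noncomputable def maxRe {m : Type*} [Fintype m] [DecidableEq m]
    (A : Matrix m m ℝ) : ℝ :=
  sSup {r : ℝ | ∃ z ∈ spectrumM A, z.re = r}

/-- The maximal real part of pairwise products of eigenvalues of two matrices. -/
noncomputable def maxReProd {m m' : Type*} [Fintype m] [DecidableEq m]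
    [Fintype m'] [DecidableEq m'] (Aa : Matrix m m ℝ) (Ao : Matrix m' m' ℝ) : ℝ :=
  sSup {r : ℝ | ∃ z ∈ spectrumM Aa, ∃ w ∈ spectrumM Ao, (z * w).re = r}

/-!
Conjugation by the orthogonal matrix `ΘP` turns a symmetric Class II matrix into a symmetric,
nonnegative, irreducible matrix `B` with the same characteristic polynomial, so the spectrum is
real; let `r` be its largest eigenvalue. For an eigenvector `v` with eigenvalue `μ`,
`|μ| ‖v‖² = |vᵀ B v| ≤ |v|ᵀ B |v| ≤ r ‖v‖²`, so the spectrum lies in `[-r, r]`, and `r > 0`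
since `B ≠ 0`. If `-r` is an eigenvalue, equality holds throughout, so `B |v| = r |v|`;
irreducibility makes `|v|` positive, and with `D = diag (sign v)` the nonnegative matrix
`B + D B D` annihilates `|v|`, whence `D B D = -B` and the spectrum is symmetric. Conversely a
symmetric spectrum contains `-r`. For the pairs, `|t| ≤ r`, `|u| ≤ q` and `t u = r q` force
`(t, u) = ± (r, q)`.
-/

namespace Matrix

variable {n R : Type*} [Fintype n] [DecidableEq n]

theorem charpoly_neg [CommRing R] (M : Matrix n n R) :
    (-M).charpoly = (-1) ^ Fintype.card n * M.charpoly.comp (-X) := by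
  simp_rw [charpoly, det_apply, Polynomial.sum_comp, Polynomial.smul_comp, Polynomial.prod_comp,
    Finset.mul_sum]
  refine Finset.sum_congr rfl fun σ _ => ?_
  rw [mul_smul_comm, ← Finset.card_univ, ← Finset.prod_const, ← Finset.prod_mul_distrib]
  congr! 2 with i
  by_cases h : σ i = i <;> simp [h, add_comm]

theorem charpoly_mul_mul_transpose [CommRing R] {Q : Matrix n n R} (hQ : Q * Qᵀ = 1)
    (M : Matrix n n R) : (Q * M * Qᵀ).charpoly = M.charpoly := by
  rw [charpoly_mul_comm, ← Matrix.mul_assoc, mul_eq_one_comm.mp hQ, Matrix.one_mul]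

end Matrix

section Spectrum

variable {n : Type*} [Fintype n] [DecidableEq n]

theorem spectrumM_eq_roots_map_charpoly (A : Matrix n n ℝ) :
    spectrumM A = (A.charpoly.map Complex.ofRealHom).roots := by
  rw [spectrumM, ← charpoly_map]
  rfl

theorem spectrumM_neg (A : Matrix n n ℝ) :
    spectrumM (-A) = (spectrumM A).map (fun z => -z) := by
  rw [spectrumM, spectrumM, Matrix.map_neg _ Complex.ofReal_neg, Matrix.charpoly_neg,
    ← Polynomial.C_1, ← C_neg, ← C_pow, roots_C_mul _ (pow_ne_zero _ (neg_ne_zero.mpr one_ne_zero)),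
    roots_comp_neg_X]

theorem Matrix.IsHermitian.spectrumM_eq {A : Matrix n n ℝ} (hA : A.IsHermitian) :
    spectrumM A = Finset.univ.val.map (fun i => (hA.eigenvalues i : ℂ)) := by
  rw [spectrumM_eq_roots_map_charpoly, hA.charpoly_eq, Polynomial.map_prod, roots_prod]
  · simp
  · simp [Finset.prod_ne_zero_iff, X_sub_C_ne_zero]

end Spectrum

namespace Matrix.IsHermitian

variable {n : Type*} [Fintype n] [DecidableEq n] {B : Matrix n n ℝ} {M : ℝ}

theorem posSemidef_smul_one_sub (hB : B.IsHermitian) (hM : ∀ i, hB.eigenvalues i ≤ M) :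
    (M • (1 : Matrix n n ℝ) - B).PosSemidef := by
  have hconj : M • (1 : Matrix n n ℝ) - B = Unitary.conjStarAlgAut ℝ _ hB.eigenvectorUnitary
      (diagonal fun i => M - hB.eigenvalues i) := by
    conv_lhs => rw [hB.spectral_theorem]
    rw [← map_one (Unitary.conjStarAlgAut ℝ (Matrix n n ℝ) hB.eigenvectorUnitary), ← map_smul,
      ← map_sub, smul_one_eq_diagonal, diagonal_sub]
    rfl
  rw [hconj, Unitary.conjStarAlgAut_apply, Unitary.isUnit_coe.posSemidef_star_right_conjugate_iff,
    posSemidef_diagonal_iff]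
  exact fun i => sub_nonneg.mpr (hM i)

theorem dotProduct_mulVec_le (hB : B.IsHermitian) (hM : ∀ i, hB.eigenvalues i ≤ M)
    (x : n → ℝ) : x ⬝ᵥ B *ᵥ x ≤ M * (x ⬝ᵥ x) := by
  have h := (hB.posSemidef_smul_one_sub hM).dotProduct_mulVec_nonneg x
  rw [star_trivial, sub_mulVec, smul_mulVec, one_mulVec, dotProduct_sub, dotProduct_smul,
    smul_eq_mul] at h
  linarith

theorem mulVec_eq_smul_of_dotProduct_mulVec_eq (hB : B.IsHermitian)
    (hM : ∀ i, hB.eigenvalues i ≤ M) {x : n → ℝ} (hx : x ⬝ᵥ B *ᵥ x = M * (x ⬝ᵥ x)) :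
    B *ᵥ x = M • x := by
  have h := (hB.posSemidef_smul_one_sub hM).dotProduct_mulVec_zero_iff x
  rw [star_trivial, sub_mulVec, smul_mulVec, one_mulVec, dotProduct_sub, dotProduct_smul,
    smul_eq_mul, hx, sub_self, sub_eq_zero] at h
  exact (h.mp rfl).symm

end Matrix.IsHermitian

namespace Matrix

variable {n : Type*} [Fintype n] {B : Matrix n n ℝ}

theorem abs_dotProduct_mulVec_le (hB : ∀ i j, 0 ≤ B i j) (x : n → ℝ) :
    |x ⬝ᵥ B *ᵥ x| ≤ |x| ⬝ᵥ B *ᵥ |x| := by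
  simp only [dotProduct, mulVec, Finset.mul_sum, Pi.abs_apply]
  refine (Finset.abs_sum_le_sum_abs _ _).trans (Finset.sum_le_sum fun i _ => ?_)
  refine (Finset.abs_sum_le_sum_abs _ _).trans (le_of_eq (Finset.sum_congr rfl fun j _ => ?_))
  rw [abs_mul, abs_mul, abs_of_nonneg (hB i j)]

theorem abs_dotProduct_abs_self (x : n → ℝ) : |x| ⬝ᵥ |x| = x ⬝ᵥ x :=
  Finset.sum_congr rfl fun i _ => abs_mul_abs_self (x i)

section OrderedRing

variable {R : Type*} [Ring R] [LinearOrder R] [IsStrictOrderedRing R]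

theorem dotProduct_self_nonneg (x : n → R) : 0 ≤ x ⬝ᵥ x :=
  Finset.sum_nonneg fun i _ => mul_self_nonneg (x i)

theorem dotProduct_self_pos {x : n → R} (hx : x ≠ 0) : 0 < x ⬝ᵥ x :=
  (dotProduct_self_nonneg x).lt_of_ne' (dotProduct_self_eq_zero.not.mpr hx)

end OrderedRing

theorem abs_mul_dotProduct_self_le (hB : ∀ i j, 0 ≤ B i j) {v : n → ℝ} {μ : ℝ}
    (hv : B *ᵥ v = μ • v) : |μ| * (v ⬝ᵥ v) ≤ |v| ⬝ᵥ B *ᵥ |v| := by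
  calc |μ| * (v ⬝ᵥ v) = |v ⬝ᵥ B *ᵥ v| := by
        rw [hv, dotProduct_smul, smul_eq_mul, abs_mul, abs_of_nonneg (dotProduct_self_nonneg v)]
    _ ≤ |v| ⬝ᵥ B *ᵥ |v| := abs_dotProduct_mulVec_le hB v

theorem pow_mulVec_eq_smul [DecidableEq n] {v : n → ℝ} {μ : ℝ} (hv : B *ᵥ v = μ • v) (k : ℕ) :
    (B ^ k) *ᵥ v = μ ^ k • v := by
  induction k with
  | zero => simp
  | succ k ih => rw [pow_succ, ← mulVec_mulVec, hv, mulVec_smul, ih, smul_smul, pow_succ']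

theorem eq_zero_of_nonneg_of_mulVec_eq_zero {m : Type*} {C : Matrix m n ℝ} (hC : ∀ i j, 0 ≤ C i j)
    {u : n → ℝ} (hu : ∀ j, 0 < u j) (h : C *ᵥ u = 0) : C = 0 := by
  ext i j
  have hterms := (Finset.sum_eq_zero_iff_of_nonneg fun l _ => mul_nonneg (hC i l) (hu l).le).mp
    (congrFun h i) j (Finset.mem_univ j)
  exact (mul_eq_zero.mp hterms).resolve_right (hu j).ne'

namespace IsHermitian

variable [DecidableEq n] {M : ℝ}

theorem abs_eigenvalues_le (hB : B.IsHermitian) (hnn : ∀ i j, 0 ≤ B i j)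
    (hM : ∀ i, hB.eigenvalues i ≤ M) (i : n) : |hB.eigenvalues i| ≤ M := by
  set v : n → ℝ := ⇑(hB.eigenvectorBasis i)
  have hv : v ≠ 0 := fun h =>
    hB.eigenvectorBasis.orthonormal.ne_zero i (by ext j; exact congrFun h j)
  refine le_of_mul_le_mul_right ?_ (dotProduct_self_pos hv)
  calc |hB.eigenvalues i| * (v ⬝ᵥ v) ≤ |v| ⬝ᵥ B *ᵥ |v| :=
        abs_mul_dotProduct_self_le hnn (hB.mulVec_eigenvectorBasis i)
    _ ≤ M * (v ⬝ᵥ v) := by rw [← abs_dotProduct_abs_self v]; exact hB.dotProduct_mulVec_le hM |v|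

theorem mulVec_abs_eq_smul (hB : B.IsHermitian) (hnn : ∀ i j, 0 ≤ B i j)
    (hM : ∀ i, hB.eigenvalues i ≤ M) {v : n → ℝ} {μ : ℝ} (hv : B *ᵥ v = μ • v) (hμ : |μ| = M) :
    B *ᵥ |v| = M • |v| := by
  refine hB.mulVec_eq_smul_of_dotProduct_mulVec_eq hM
    (le_antisymm (hB.dotProduct_mulVec_le hM _) ?_)
  rw [abs_dotProduct_abs_self, ← hμ]
  exact abs_mul_dotProduct_self_le hnn hv

end IsHermitian

theorem charpoly_neg_eq_of_mulVec_eq_neg_smul [DecidableEq n] (hnn : ∀ i j, 0 ≤ B i j) {v : n → ℝ}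
    (hv0 : ∀ j, v j ≠ 0) {M : ℝ} (hv : B *ᵥ v = (-M) • v) (habs : B *ᵥ |v| = M • |v|) :
    (-B).charpoly = B.charpoly := by
  set D : Matrix n n ℝ := diagonal fun j => (SignType.sign (v j) : ℝ)
  have hsign : ∀ j, (SignType.sign (v j) : ℝ) = 1 ∨ (SignType.sign (v j) : ℝ) = -1 := fun j => by
    rcases (hv0 j).lt_or_gt with h | h <;> simp [h]
  have hC : ∀ i j, 0 ≤ (B + D * B * D) i j := fun i j => by
    have : (B + D * B * D) i j =
        B i j * (1 + SignType.sign (v i) * SignType.sign (v j)) := by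
      simp only [D, add_apply, diagonal_mul, mul_diagonal]
      ring
    rw [this]
    refine mul_nonneg (hnn i j) ?_
    rcases hsign i with h | h <;> rcases hsign j with h' | h' <;> norm_num [h, h']
  have hker : (B + D * B * D) *ᵥ |v| = 0 := by
    have hDabs : D *ᵥ |v| = v := funext fun j => by simp [D, mulVec_diagonal]
    have hDv : D *ᵥ v = |v| := funext fun j => by simp [D, mulVec_diagonal]
    rw [add_mulVec, ← mulVec_mulVec, ← mulVec_mulVec, hDabs, hv, mulVec_smul, hDv, habs,
      neg_smul, add_neg_cancel]
  have hDBD : D * B * D = -B := eq_neg_of_add_eq_zero_right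
    (eq_zero_of_nonneg_of_mulVec_eq_zero hC (fun j => abs_pos.mpr (hv0 j)) hker)
  have hD : D * Dᵀ = 1 := by
    rw [diagonal_transpose, diagonal_mul_diagonal, ← diagonal_one]
    exact congrArg diagonal (funext fun j => by rcases hsign j with h | h <;> simp [h])
  rw [← hDBD, ← charpoly_mul_mul_transpose hD B, diagonal_transpose]

end Matrix

structure IsPerronRoot (s : Multiset ℂ) (r : ℝ) : Prop where
  pos : 0 < r
  mem : (r : ℂ) ∈ s
  exists_real : ∀ z ∈ s, ∃ t : ℝ, z = t ∧ |t| ≤ r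

theorem mul_eq_mul_iff_of_abs_le {t u r q : ℝ} (hr : 0 < r) (hq : 0 < q) (ht : |t| ≤ r)
    (hu : |u| ≤ q) : t * u = r * q ↔ (t = r ∧ u = q) ∨ (t = -r ∧ u = -q) := by
  refine ⟨fun h => ?_, by rintro (⟨rfl, rfl⟩ | ⟨rfl, rfl⟩) <;> ring⟩
  have habs : |t| * |u| = r * q := by rw [← abs_mul, h, abs_of_pos (mul_pos hr hq)]
  have htr : |t| = r := by nlinarith [abs_nonneg t, abs_nonneg u]
  have huq : |u| = q := by nlinarith [abs_nonneg t, abs_nonneg u]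
  rcases abs_eq hr.le |>.mp htr with rfl | rfl <;> rcases abs_eq hq.le |>.mp huq with rfl | rfl
  · exact .inl ⟨rfl, rfl⟩
  · exfalso; nlinarith
  · exfalso; nlinarith
  · exact .inr ⟨rfl, rfl⟩

namespace IsPerronRoot

variable {m m' : Type*} [Fintype m] [DecidableEq m] [Fintype m'] [DecidableEq m']
  {A : Matrix m m ℝ} {A' : Matrix m' m' ℝ} {r q : ℝ}

theorem specRadius_eq (h : IsPerronRoot (spectrumM A) r) : specRadius A = r := by
  refine IsGreatest.csSup_eq ⟨⟨r, h.mem, by simp [abs_of_pos h.pos]⟩, ?_⟩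
  rintro _ ⟨z, hz, rfl⟩
  obtain ⟨t, rfl, ht⟩ := h.exists_real z hz
  simpa using ht

theorem maxRe_eq (h : IsPerronRoot (spectrumM A) r) : maxRe A = r := by
  refine IsGreatest.csSup_eq ⟨⟨r, h.mem, Complex.ofReal_re r⟩, ?_⟩
  rintro _ ⟨z, hz, rfl⟩
  obtain ⟨t, rfl, ht⟩ := h.exists_real z hz
  exact (le_abs_self t).trans ht

theorem maxReProd_eq (ha : IsPerronRoot (spectrumM A) r) (hb : IsPerronRoot (spectrumM A') q) :
    maxReProd A A' = r * q := by
  refine IsGreatest.csSup_eq ⟨⟨r, ha.mem, q, hb.mem, by simp⟩, ?_⟩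
  rintro _ ⟨z, hz, w, hw, rfl⟩
  obtain ⟨t, rfl, ht⟩ := ha.exists_real z hz
  obtain ⟨u, rfl, hu⟩ := hb.exists_real w hw
  calc ((t : ℂ) * u).re = t * u := by simp
    _ ≤ |t| * |u| := by rw [← abs_mul]; exact le_abs_self _
    _ ≤ r * q := mul_le_mul ht hu (abs_nonneg u) ha.pos.le

theorem re_mul_eq_maxReProd_iff (ha : IsPerronRoot (spectrumM A) r)
    (hb : IsPerronRoot (spectrumM A') q) {z w : ℂ} (hz : z ∈ spectrumM A) (hw : w ∈ spectrumM A') :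
    (z * w).re = maxReProd A A' ↔ (z = r ∧ w = q) ∨ (z = -r ∧ w = -q) := by
  obtain ⟨t, rfl, ht⟩ := ha.exists_real z hz
  obtain ⟨u, rfl, hu⟩ := hb.exists_real w hw
  rw [maxReProd_eq ha hb, ← Complex.ofReal_mul, Complex.ofReal_re,
    mul_eq_mul_iff_of_abs_le ha.pos hb.pos ht hu]
  norm_cast

theorem setOf_re_mul_eq_maxReProd (ha : IsPerronRoot (spectrumM A) r)
    (hb : IsPerronRoot (spectrumM A') q) :
    {p : ℂ × ℂ | p.1 ∈ spectrumM A ∧ p.2 ∈ spectrumM A' ∧ (p.1 * p.2).re = maxReProd A A'} =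
      {p : ℂ × ℂ | p = ((r : ℂ), (q : ℂ)) ∨
        (p = (-(r : ℂ), -(q : ℂ)) ∧ -(r : ℂ) ∈ spectrumM A ∧ -(q : ℂ) ∈ spectrumM A')} := by
  ext ⟨z, w⟩
  simp only [Set.mem_ofPred_eq, Prod.mk.injEq]
  constructor
  · rintro ⟨hz, hw, h⟩
    rcases (re_mul_eq_maxReProd_iff ha hb hz hw).mp h with h | h
    · exact .inl h
    · exact .inr ⟨h, h.1 ▸ hz, h.2 ▸ hw⟩
  · rintro (⟨rfl, rfl⟩ | ⟨⟨rfl, rfl⟩, hz, hw⟩)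
    · exact ⟨ha.mem, hb.mem, (re_mul_eq_maxReProd_iff ha hb ha.mem hb.mem).mpr (.inl ⟨rfl, rfl⟩)⟩
    · exact ⟨hz, hw, (re_mul_eq_maxReProd_iff ha hb hz hw).mpr (.inr ⟨rfl, rfl⟩)⟩

end IsPerronRoot

namespace IrreducibleNonneg

variable {N : ℕ} {B : Matrix (Fin N) (Fin N) ℝ}

theorem ne_zero (hN : 0 < N) (hB : IrreducibleNonneg B) : B ≠ 0 := by
  rintro rfl
  obtain ⟨k, hk, hpos⟩ := hB.2 ⟨0, hN⟩ ⟨0, hN⟩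
  simp [zero_pow hk.ne'] at hpos

theorem pos_of_mulVec_eq_smul (hB : IrreducibleNonneg B) {u : Fin N → ℝ} (hu0 : ∀ j, 0 ≤ u j)
    (hu : u ≠ 0) {M : ℝ} (hBu : B *ᵥ u = M • u) (j : Fin N) : 0 < u j := by
  obtain ⟨l, hl⟩ := Function.ne_iff.mp hu
  obtain ⟨k, -, hk⟩ := hB.2 j l
  have hpow : ((B ^ k) *ᵥ u) j = M ^ k * u j := by
    rw [pow_mulVec_eq_smul hBu]
    rfl
  have hlt : 0 < ((B ^ k) *ᵥ u) j :=
    calc 0 < (B ^ k) j l * u l := mul_pos hk ((hu0 l).lt_of_ne' hl)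
      _ ≤ ∑ i, (B ^ k) j i * u i := Finset.single_le_sum
          (fun i _ => mul_nonneg (pow_apply_nonneg hB.1 k j i) (hu0 i)) (Finset.mem_univ l)
  refine (hu0 j).lt_of_ne' fun h => ?_
  rw [hpow, h, mul_zero] at hlt
  exact lt_irrefl _ hlt

theorem exists_isPerronRoot (hN : 0 < N) (hB : IrreducibleNonneg B) (hs : B.IsSymm) :
    ∃ r, IsPerronRoot (spectrumM B) r := by
  have hH : B.IsHermitian := isHermitian_iff_isSymm.mpr hs
  have : Nonempty (Fin N) := ⟨⟨0, hN⟩⟩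
  obtain ⟨i, -, hi⟩ := Finset.exists_max_image Finset.univ hH.eigenvalues Finset.univ_nonempty
  have habs := hH.abs_eigenvalues_le hB.1 fun j => hi j (Finset.mem_univ j)
  refine ⟨hH.eigenvalues i, ⟨?_, ?_, ?_⟩⟩
  · by_contra! hr
    refine hB.ne_zero hN (hH.eigenvalues_eq_zero_iff.mp (funext fun j => ?_))
    exact abs_nonpos_iff.mp ((habs j).trans hr)
  · rw [hH.spectrumM_eq]
    exact Multiset.mem_map_of_mem _ (Finset.mem_univ_val i)
  · intro z hz
    rw [hH.spectrumM_eq, Multiset.mem_map] at hz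
    obtain ⟨j, -, rfl⟩ := hz
    exact ⟨_, rfl, habs j⟩

theorem spectrumM_eq_map_neg (hB : IrreducibleNonneg B) (hs : B.IsSymm) {r : ℝ}
    (hr : IsPerronRoot (spectrumM B) r) (hneg : -(r : ℂ) ∈ spectrumM B) :
    spectrumM B = (spectrumM B).map (fun z => -z) := by
  have hH : B.IsHermitian := isHermitian_iff_isSymm.mpr hs
  have hle : ∀ j, hH.eigenvalues j ≤ r := fun j => by
    obtain ⟨t, ht, htr⟩ := hr.exists_real _
      (hH.spectrumM_eq ▸ Multiset.mem_map_of_mem _ (Finset.mem_univ_val j))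
    rw [Complex.ofReal_injective ht]
    exact (le_abs_self t).trans htr
  rw [hH.spectrumM_eq, Multiset.mem_map] at hneg
  obtain ⟨i, -, hi⟩ := hneg
  have hv := hH.mulVec_eigenvectorBasis i
  rw [show hH.eigenvalues i = -r by exact_mod_cast hi] at hv
  set v : Fin N → ℝ := ⇑(hH.eigenvectorBasis i)
  have hv_ne : v ≠ 0 := fun h =>
    hH.eigenvectorBasis.orthonormal.ne_zero i (by ext j; exact congrFun h j)
  have habs : B *ᵥ |v| = r • |v| :=
    hH.mulVec_abs_eq_smul hB.1 hle hv (by rw [abs_neg, abs_of_pos hr.pos])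
  have hv0 : ∀ j, v j ≠ 0 := fun j => abs_pos.mp
    (hB.pos_of_mulVec_eq_smul (u := |v|) (fun j => abs_nonneg (v j))
      (fun h => hv_ne (funext fun j => abs_eq_zero.mp (congrFun h j))) habs j)
  rw [← spectrumM_neg, spectrumM_eq_roots_map_charpoly, spectrumM_eq_roots_map_charpoly,
    charpoly_neg_eq_of_mulVec_eq_neg_smul hB.1 hv0 hv habs]

end IrreducibleNonneg

section ClassII

variable {N : ℕ}

theorem IsSwitching.transpose_eq {Θ : Matrix (Fin N) (Fin N) ℝ} (hΘ : IsSwitching Θ) : Θᵀ = Θ := by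
  obtain ⟨θ, -, rfl⟩ := hΘ
  exact diagonal_transpose θ

theorem IsSwitching.mul_self {Θ : Matrix (Fin N) (Fin N) ℝ} (hΘ : IsSwitching Θ) : Θ * Θ = 1 := by
  obtain ⟨θ, hθ, rfl⟩ := hΘ
  rw [diagonal_mul_diagonal, ← diagonal_one]
  exact congrArg diagonal (funext fun i => by rcases hθ i with h | h <;> simp [h])

theorem IsPermMatrix.mul_transpose_self {P : Matrix (Fin N) (Fin N) ℝ} (hP : IsPermMatrix P) :
    P * Pᵀ = 1 := by
  obtain ⟨σ, rfl⟩ := hP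
  have : (Matrix.of fun i j => if σ j = i then (1 : ℝ) else 0) = (σ⁻¹).permMatrix ℝ := by
    ext i j
    simp [PEquiv.toMatrix_apply, Equiv.eq_symm_apply, eq_comm]
  rw [this, transpose_permMatrix, inv_inv, ← permMatrix_mul, mul_inv_cancel, permMatrix_one]

theorem ClassII.exists_orthogonal_conj {A : Matrix (Fin N) (Fin N) ℝ} (hA : ClassII A) :
    ∃ Q : Matrix (Fin N) (Fin N) ℝ, Q * Qᵀ = 1 ∧ IrreducibleNonneg (Q * A * Qᵀ) := by
  obtain ⟨Θ, P, hΘ, hP, hB⟩ := hA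
  refine ⟨Θ * P, ?_, ?_⟩
  · rw [transpose_mul, hΘ.transpose_eq, Matrix.mul_assoc, ← Matrix.mul_assoc P,
      hP.mul_transpose_self, Matrix.one_mul, hΘ.mul_self]
  · simpa only [transpose_mul, hΘ.transpose_eq, Matrix.mul_assoc] using hB

theorem ClassII.exists_isPerronRoot (hN : 0 < N) {A : Matrix (Fin N) (Fin N) ℝ} (hs : A.IsSymm)
    (hA : ClassII A) : ∃ r, IsPerronRoot (spectrumM A) r ∧
      (-(r : ℂ) ∈ spectrumM A ↔ spectrumM A = (spectrumM A).map (fun z => -z)) := by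
  obtain ⟨Q, hQ, hB⟩ := hA.exists_orthogonal_conj
  have hspec : spectrumM (Q * A * Qᵀ) = spectrumM A := by
    rw [spectrumM_eq_roots_map_charpoly, spectrumM_eq_roots_map_charpoly,
      charpoly_mul_mul_transpose hQ]
  have hBs : (Q * A * Qᵀ).IsSymm := by
    rw [IsSymm, transpose_mul, transpose_mul, transpose_transpose, hs.eq, Matrix.mul_assoc]
  obtain ⟨r, hr⟩ := hB.exists_isPerronRoot hN hBs
  refine ⟨r, hspec ▸ hr, fun hneg => ?_, fun hsymm => ?_⟩
  · rw [← hspec] at hneg ⊢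
    exact hB.spectrumM_eq_map_neg hBs hr hneg
  · rw [hsymm]
    exact Multiset.mem_map_of_mem _ (hspec ▸ hr.mem)

end ClassII

theorem stmt9 {Na No : ℕ} (hNa : 0 < Na) (hNo : 0 < No)
    (Aa : Matrix (Fin Na) (Fin Na) ℝ) (Ao : Matrix (Fin No) (Fin No) ℝ)
    (hsa : Aa.IsSymm) (hso : Ao.IsSymm)
    (ha : ClassII Aa) (ho : ClassII Ao) :
    -- (a) spectra of both matrices symmetric about the origin
    ((spectrumM Aa = (spectrumM Aa).map (fun z => -z) ∧
      spectrumM Ao = (spectrumM Ao).map (fun z => -z)) →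
      {p : ℂ × ℂ | p.1 ∈ spectrumM Aa ∧ p.2 ∈ spectrumM Ao ∧
          (p.1 * p.2).re = maxReProd Aa Ao} =
        {(((specRadius Aa : ℂ)), ((specRadius Ao : ℂ))),
          ((-(specRadius Aa : ℂ)), (-(specRadius Ao : ℂ)))}) ∧
    -- (b) at least one spectrum not symmetric about the origin
    ((spectrumM Aa ≠ (spectrumM Aa).map (fun z => -z) ∨
      spectrumM Ao ≠ (spectrumM Ao).map (fun z => -z)) →
      {p : ℂ × ℂ | p.1 ∈ spectrumM Aa ∧ p.2 ∈ spectrumM Ao ∧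
          (p.1 * p.2).re = maxReProd Aa Ao} =
        {(((specRadius Aa : ℂ)), ((specRadius Ao : ℂ)))} ∧
      {p : ℂ × ℂ | p.1 ∈ spectrumM Aa ∧ p.2 ∈ spectrumM Ao ∧
          (p.1 * p.2).re = maxReProd Aa Ao} =
        {p : ℂ × ℂ | p.1 ∈ spectrumM Aa ∧ p.2 ∈ spectrumM Ao ∧
          p.1 = ((maxRe Aa : ℂ)) ∧ p.2 = ((maxRe Ao : ℂ))}) := by
  obtain ⟨ra, hra, hnega⟩ := ClassII.exists_isPerronRoot hNa hsa ha
  obtain ⟨ro, hro, hnego⟩ := ClassII.exists_isPerronRoot hNo hso ho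
  rw [hra.setOf_re_mul_eq_maxReProd hro, hra.specRadius_eq, hro.specRadius_eq, hra.maxRe_eq,
    hro.maxRe_eq]
  refine ⟨fun ⟨hsyma, hsymo⟩ => ?_, fun hasym => ?_⟩
  · ext p
    simp [hnega.mpr hsyma, hnego.mpr hsymo]
  · have hnot : ¬(-(ra : ℂ) ∈ spectrumM Aa ∧ -(ro : ℂ) ∈ spectrumM Ao) := fun h =>
      hasym.elim (· (hnega.mp h.1)) (· (hnego.mp h.2))
    have hsingle : {p : ℂ × ℂ | p = ((ra : ℂ), (ro : ℂ)) ∨ (p = (-(ra : ℂ), -(ro : ℂ)) ∧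
        -(ra : ℂ) ∈ spectrumM Aa ∧ -(ro : ℂ) ∈ spectrumM Ao)} = {((ra : ℂ), (ro : ℂ))} := by
      ext p
      simp [hnot]
    refine ⟨hsingle, hsingle.trans ?_⟩
    ext ⟨z, w⟩
    simp only [Set.mem_singleton_iff, Set.mem_ofPred_eq, Prod.mk.injEq]
    constructor
    · rintro ⟨rfl, rfl⟩
      exact ⟨hra.mem, hro.mem, rfl, rfl⟩
    · rintro ⟨-, -, rfl, rfl⟩
      exact ⟨rfl, rfl⟩
end

section
/- Let A_a be a real N_a×N_a matrix, A_o a real N_o×N_o matrix, d > 0, α, β, γ, δ ≥ 0. Suppose λ ∈ σ(A_a) and μ ∈ σ(A_o) are real simple eigenvalues, K₀ := α + γλ + βμ + δλμ > 0, and for every pair (λ',μ') ∈ σ(A_a)×σ(A_o) with (λ',μ') ≠ (λ,μ) one has α + γ Re λ' + β Re μ' + δ Re(λ'μ') < K₀. Let u* := d/K₀ and J(u) := (−d + uα) I_{N_aN_o} + uγ (A_a ⊗ I_{N_o}) + uβ (I_{N_a} ⊗ A_o) + uδ (A_a ⊗ A_o). Then 0 is a simple eigenvalue of J(u*), the kernel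 of J(u*) is spanned by v_a ⊗ v_o where v_a, v_o are eigenvectors of A_a, A_o for λ, μ respectively, and every nonzero eigenvalue of J(u*) has strictly negative real part. -/
open Matrix Polynomial

open Kronecker in
/-- The Jacobian at the neutral equilibrium of the homogeneous multi-topic
belief-formation model:
`J(u) = (−d + uα) I + uγ (A_a ⊗ I) + uβ (I ⊗ A_o) + uδ (A_a ⊗ A_o)`. -/
noncomputable def Jmat {Na No : ℕ} (Aa : Matrix (Fin Na) (Fin Na) ℝ)
    (Ao : Matrix (Fin No) (Fin No) ℝ) (d u α β γ δ : ℝ) :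
    Matrix (Fin Na × Fin No) (Fin Na × Fin No) ℝ :=
  (-d + u * α) • (1 : Matrix (Fin Na × Fin No) (Fin Na × Fin No) ℝ)
    + (u * γ) • (Aa ⊗ₖ (1 : Matrix (Fin No) (Fin No) ℝ))
    + (u * β) • ((1 : Matrix (Fin Na) (Fin Na) ℝ) ⊗ₖ Ao)
    + (u * δ) • (Aa ⊗ₖ Ao)

/-!
The Jacobian is `J = c + g P + b Q + e P Q` with `c = -d + uα`, `g = uγ`, `b = uβ`, `e = uδ` and
the commuting operators `P = A_a ⊗ I`, `Q = I ⊗ A_o`. On a joint generalized eigenspace of `P`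
and `Q` for `(λ', μ')`, the operator `J - φ(λ', μ')`, where `φ(x, y) = c + g x + b y + e x y`, is
nilpotent, and over `ℂ` these joint generalized eigenspaces decompose the space. Hence every
generalized eigenspace of `J` for `η` is the sum of the joint ones with `φ(λ', μ') = η`, and a
nonzero joint generalized eigenspace for `(λ', μ')` forces `λ' ∈ σ(A_a)`, `μ' ∈ σ(A_o)` (look at
a nonzero column or row).

At `u = u*` we have `φ(λ, μ) = 0`, while the dominance hypothesis gives `Re φ(λ', μ') < 0` for
every other pair of eigenvalues. So the generalized kernel of `J` is the joint generalized
eigenspace for `(λ, μ)`, which is spanned by `v_a ⊗ v_o` because `λ` and `μ` are simple: every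
column of one of its elements is a multiple of `v_a` and every row a multiple of `v_o`.
-/

open Module Kronecker

theorem Commute.smul_one_add_smul_add_smul_add_smul_mul {K A : Type*} [Field K] [Ring A]
    [Algebra K A] {P Q T : A} (hP : Commute P T) (hQ : Commute Q T) (c g b e : K) :
    Commute (c • 1 + g • P + b • Q + e • (P * Q)) T :=
  ((((Commute.one_left T).smul_left c).add_left (hP.smul_left g)).add_left
    (hQ.smul_left b)).add_left ((hP.mul_left hQ).smul_left e)

namespace Module.End

theorem mapsTo_maxGenEigenspace_of_comp_eq {R M N : Type*} [CommRing R] [AddCommGroup M]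
    [Module R M] [AddCommGroup N] [Module R N] {π : M →ₗ[R] N} {f : End R M} {g : End R N}
    (h : π ∘ₗ f = g ∘ₗ π) (μ : R) :
    Set.MapsTo π (f.maxGenEigenspace μ) (g.maxGenEigenspace μ) := by
  intro x hx
  obtain ⟨k, hk⟩ := (mem_maxGenEigenspace _ _ _).mp hx
  refine (mem_maxGenEigenspace _ _ _).mpr ⟨k, ?_⟩
  have hshift : π ∘ₗ (f - μ • 1) = (g - μ • 1) ∘ₗ π := by
    ext y
    simpa using LinearMap.congr_fun h y
  rw [← LinearMap.comp_apply, commute_pow_left_of_commute hshift.symm, LinearMap.comp_apply, hk,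
    map_zero]

variable {K V : Type*} [Field K] [AddCommGroup V] [Module K V]

theorem maxGenEigenspace_inf_le_add {f g : End K V} (hfg : Commute f g) (μ ν : K) :
    f.maxGenEigenspace μ ⊓ g.maxGenEigenspace ν ≤ (f + g).maxGenEigenspace (μ + ν) :=
  genEigenspace_inf_le_add f g μ ν ⊤ ⊤ hfg

theorem maxGenEigenspace_le_smul (f : End K V) (μ t : K) :
    f.maxGenEigenspace μ ≤ (t • f).maxGenEigenspace (t * μ) :=
  genEigenspace_le_smul f μ t ⊤

theorem maxGenEigenspace_smul_one (c : K) : (c • 1 : End K V).maxGenEigenspace c = ⊤ :=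
  eq_top_iff.mpr fun _ _ ↦ (mem_maxGenEigenspace _ _ _).mpr ⟨1, by simp⟩

theorem maxGenEigenspace_inf_le_mul {f g : End K V} (hfg : Commute f g) (μ ν : K) :
    f.maxGenEigenspace μ ⊓ g.maxGenEigenspace ν ≤ (f * g).maxGenEigenspace (μ * ν) := by
  -- `f g - μ ν = (f - μ) g + μ (g - ν)`, and `(f - μ) g` is nilpotent on `maxGenEigenspace f μ`
  rintro x ⟨hxf, hxg⟩
  have hsplit : f * g = (f - μ • 1) * g + μ • g := by
    rw [sub_mul, smul_mul_assoc, one_mul, sub_add_cancel]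
  have hc : Commute (f - μ • 1) g := hfg.sub_left ((Commute.one_left g).smul_left μ)
  have hnil : x ∈ ((f - μ • 1) * g).maxGenEigenspace 0 := by
    obtain ⟨k, hk⟩ := (mem_maxGenEigenspace _ _ _).mp hxf
    refine (mem_maxGenEigenspace _ _ _).mpr ⟨k, ?_⟩
    rw [zero_smul, sub_zero, hc.mul_pow, (hc.pow_pow k k).eq, mul_apply, hk, map_zero]
  simpa [hsplit] using maxGenEigenspace_inf_le_add ((hc.mul_left (Commute.refl g)).smul_right μ)
    0 (μ * ν) ⟨hnil, maxGenEigenspace_le_smul g ν μ hxg⟩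

theorem maxGenEigenspace_inf_le_bilinear {P Q : End K V} (hPQ : Commute P Q) (c g b e μ ν : K) :
    P.maxGenEigenspace μ ⊓ Q.maxGenEigenspace ν ≤
      (c • 1 + g • P + b • Q + e • (P * Q)).maxGenEigenspace (c + g * μ + b * ν + e * (μ * ν)) := by
  rintro x ⟨hxP, hxQ⟩
  have hc : x ∈ (c • 1 : End K V).maxGenEigenspace c := by
    rw [maxGenEigenspace_smul_one]
    trivial
  have hcg := maxGenEigenspace_inf_le_add (((Commute.one_left P).smul_left c).smul_right g) _ _
    ⟨hc, maxGenEigenspace_le_smul P μ g hxP⟩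
  have hcgb := maxGenEigenspace_inf_le_add
    ((((Commute.one_left Q).smul_left c).add_left (hPQ.smul_left g)).smul_right b) _ _
    ⟨hcg, maxGenEigenspace_le_smul Q ν b hxQ⟩
  have hPPQ : Commute P (P * Q) := (Commute.refl P).mul_right hPQ
  have hQPQ : Commute Q (P * Q) := hPQ.symm.mul_right (Commute.refl Q)
  exact maxGenEigenspace_inf_le_add
    (((((Commute.one_left _).smul_left c).add_left (hPPQ.smul_left g)).add_left
      (hQPQ.smul_left b)).smul_right e) _ _
    ⟨hcgb, maxGenEigenspace_le_smul _ _ e (maxGenEigenspace_inf_le_mul hPQ μ ν ⟨hxP, hxQ⟩)⟩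

theorem maxGenEigenspace_eq_iSup_inf [IsAlgClosed K] [FiniteDimensional K V]
    {F P Q : End K V} (hPQ : Commute P Q) (hFP : Commute F P) (hFQ : Commute F Q)
    {φ : K → K → K} (hφ : ∀ μ ν, P.maxGenEigenspace μ ⊓ Q.maxGenEigenspace ν ≤
      F.maxGenEigenspace (φ μ ν)) (η : K) :
    F.maxGenEigenspace η =
      ⨆ μ, ⨆ ν, ⨆ (_ : φ μ ν = η), P.maxGenEigenspace μ ⊓ Q.maxGenEigenspace ν := by
  set p := F.maxGenEigenspace η
  refine le_antisymm ?_ (iSup_le fun μ ↦ iSup_le fun ν ↦ iSup_le fun h ↦ by subst h; exact hφ μ ν)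
  have hpP : ∀ x ∈ p, P x ∈ p := fun _ hx ↦ mapsTo_maxGenEigenspace_of_comm hFP η hx
  have hpQ : ∀ x ∈ p, Q x ∈ p := fun _ hx ↦ mapsTo_maxGenEigenspace_of_comm hFQ η hx
  rw [Submodule.eq_iSup_inf_genEigenspace ⊤ hpP (iSup_maxGenEigenspace_eq_top P)]
  refine iSup_mono fun μ ↦ ?_
  rw [Submodule.eq_iSup_inf_genEigenspace (p := p ⊓ P.maxGenEigenspace μ) ⊤
    (fun x hx ↦ ⟨hpQ x hx.1, mapsTo_maxGenEigenspace_of_comm hPQ μ hx.2⟩)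
    (iSup_maxGenEigenspace_eq_top Q)]
  refine iSup_mono fun ν ↦ ?_
  have hpiece : p ⊓ P.maxGenEigenspace μ ⊓ Q.maxGenEigenspace ν ≤
      P.maxGenEigenspace μ ⊓ Q.maxGenEigenspace ν :=
    le_inf (inf_le_left.trans inf_le_right) inf_le_right
  by_cases h : φ μ ν = η
  · exact le_iSup_of_le h hpiece
  · have hdisj := (F.disjoint_genEigenspace (Ne.symm h) ⊤ ⊤).eq_bot
    exact (le_inf (inf_le_left.trans inf_le_left) (hpiece.trans (hφ μ ν))).trans
      (hdisj.le.trans bot_le)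

end Module.End

namespace Matrix

section CommRing

variable {R : Type*} [CommRing R] {l m n p : Type*}

/-- `Jmat Aa Ao d u α β γ δ` unfolds to
`bilinKronecker Aa Ao (-d + u * α) (u * γ) (u * β) (u * δ)`. -/
def bilinKronecker [DecidableEq m] [DecidableEq n] (A : Matrix m m R) (B : Matrix n n R)
    (c g b e : R) : Matrix (m × n) (m × n) R :=
  c • 1 + g • (A ⊗ₖ (1 : Matrix n n R)) + b • ((1 : Matrix m m R) ⊗ₖ B) + e • (A ⊗ₖ B)

theorem map_bilinKronecker [DecidableEq m] [DecidableEq n] {S : Type*} [CommRing S] (f : R →+* S)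
    (A : Matrix m m R) (B : Matrix n n R) (c g b e : R) :
    (bilinKronecker A B c g b e).map f =
      bilinKronecker (A.map f) (B.map f) (f c) (f g) (f b) (f e) := by
  ext ⟨i, j⟩ ⟨k, l⟩
  simp [bilinKronecker, one_apply, apply_ite f]

variable [Fintype m] [Fintype n]

theorem kronecker_mulVec_kronecker (A : Matrix l m R) (B : Matrix p n R) (v : m → R)
    (w : n → R) :
    (A ⊗ₖ B) *ᵥ (fun q ↦ v q.1 * w q.2) = fun q ↦ (A *ᵥ v) q.1 * (B *ᵥ w) q.2 := by
  ext ⟨i, j⟩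
  simp only [mulVec, dotProduct, Fintype.sum_prod_type, kroneckerMap_apply, Finset.sum_mul_sum]
  exact Finset.sum_congr rfl fun _ _ ↦ Finset.sum_congr rfl fun _ _ ↦ by ring

theorem kronecker_one_mulVec_apply [DecidableEq n] (A : Matrix m m R) (x : m × n → R)
    (i : m) (j : n) :
    ((A ⊗ₖ (1 : Matrix n n R)) *ᵥ x) (i, j) = (A *ᵥ fun k ↦ x (k, j)) i := by
  simp only [mulVec, dotProduct, Fintype.sum_prod_type, kroneckerMap_apply, one_apply, mul_ite,
    mul_one, mul_zero, ite_mul, zero_mul]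
  rw [Finset.sum_comm]
  simp

theorem one_kronecker_mulVec_apply [DecidableEq m] (B : Matrix n n R) (x : m × n → R)
    (i : m) (j : n) :
    (((1 : Matrix m m R) ⊗ₖ B) *ᵥ x) (i, j) = (B *ᵥ fun k ↦ x (i, k)) j := by
  simp [mulVec, dotProduct, Fintype.sum_prod_type, kroneckerMap_apply, one_apply]

variable [DecidableEq m] [DecidableEq n]

theorem commute_kronecker_one_one_kronecker (A : Matrix m m R) (B : Matrix n n R) :
    Commute (A ⊗ₖ (1 : Matrix n n R)) ((1 : Matrix m m R) ⊗ₖ B) := by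
  rw [Commute, SemiconjBy, ← mul_kronecker_mul, ← mul_kronecker_mul]
  simp

theorem bilinKronecker_mulVec {A : Matrix m m R} {B : Matrix n n R} {μ ν : R} {v : m → R}
    {w : n → R} (hv : A *ᵥ v = μ • v) (hw : B *ᵥ w = ν • w) (c g b e : R) :
    bilinKronecker A B c g b e *ᵥ (fun q ↦ v q.1 * w q.2) =
      (c + g * μ + b * ν + e * (μ * ν)) • fun q ↦ v q.1 * w q.2 := by
  simp only [bilinKronecker, add_mulVec, smul_mulVec, one_mulVec, kronecker_mulVec_kronecker, hv,
    hw]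
  ext q
  simp only [Pi.add_apply, Pi.smul_apply, smul_eq_mul]
  ring

end CommRing

section Field

variable {K : Type*} [Field K] {m n : Type*}

theorem mul_fst_snd_ne_zero {v : m → K} {w : n → K} (hv : v ≠ 0) (hw : w ≠ 0) :
    (fun q : m × n ↦ v q.1 * w q.2) ≠ 0 := by
  obtain ⟨i, hi⟩ := Function.ne_iff.mp hv
  obtain ⟨j, hj⟩ := Function.ne_iff.mp hw
  exact Function.ne_iff.mpr ⟨(i, j), mul_ne_zero hi hj⟩

theorem mem_span_singleton_of_forall_slices {v : m → K} {w : n → K} {x : m × n → K}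
    (hcol : ∀ j, (fun i ↦ x (i, j)) ∈ K ∙ v) (hrow : ∀ i, (fun j ↦ x (i, j)) ∈ K ∙ w) :
    x ∈ K ∙ (fun q ↦ v q.1 * w q.2) := by
  choose c hc using fun j ↦ Submodule.mem_span_singleton.mp (hcol j)
  by_cases hv : v = 0
  · have hx : x = 0 := funext fun ⟨i, j⟩ ↦ by simpa [hv] using (congrFun (hc j) i).symm
    exact hx ▸ Submodule.zero_mem _
  obtain ⟨i₀, hi₀⟩ : ∃ i₀, v i₀ ≠ 0 := Function.ne_iff.mp hv
  obtain ⟨d, hd⟩ := Submodule.mem_span_singleton.mp (hrow i₀)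
  refine Submodule.mem_span_singleton.mpr ⟨d / v i₀, funext fun ⟨i, j⟩ ↦ ?_⟩
  have hcol_i := congrFun (hc j) i
  have hcol_i₀ := congrFun (hc j) i₀
  have hrow_j := congrFun hd j
  simp only [Pi.smul_apply, smul_eq_mul] at hcol_i hcol_i₀ hrow_j ⊢
  rw [← hcol_i]
  field_simp
  linear_combination v i * (hrow_j - hcol_i₀)

variable [Fintype m] [DecidableEq m] [Fintype n] [DecidableEq n]

theorem finrank_maxGenEigenspace_toLin' (A : Matrix n n K) (μ : K) :
    finrank K (End.maxGenEigenspace (toLin' A) μ) = A.charpoly.rootMultiplicity μ := by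
  rw [LinearMap.finrank_maxGenEigenspace_eq, charpoly_toLin']

theorem maxGenEigenspace_toLin'_ne_bot_iff {A : Matrix n n K} {μ : K} :
    End.maxGenEigenspace (toLin' A) μ ≠ ⊥ ↔ μ ∈ A.charpoly.roots := by
  rw [mem_roots A.charpoly_monic.ne_zero, ← rootMultiplicity_pos A.charpoly_monic.ne_zero,
    ← finrank_maxGenEigenspace_toLin', Nat.pos_iff_ne_zero, Ne, Ne, Submodule.finrank_eq_zero]

theorem exists_mulVec_eq_smul_of_isRoot_charpoly {A : Matrix n n K} {μ : K}
    (h : A.charpoly.IsRoot μ) : ∃ v : n → K, v ≠ 0 ∧ A *ᵥ v = μ • v := by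
  rw [← charpoly_toLin', ← End.hasEigenvalue_iff_isRoot_charpoly] at h
  obtain ⟨v, hv⟩ := h.exists_hasEigenvector
  exact ⟨v, hv.2, hv.apply_eq_smul⟩

theorem mem_maxGenEigenspace_toLin'_of_mulVec_eq_smul {A : Matrix n n K} {μ : K} {v : n → K}
    (hv : A *ᵥ v = μ • v) : v ∈ End.maxGenEigenspace (toLin' A) μ :=
  (End.mem_maxGenEigenspace _ _ _).mpr ⟨1, by simp [hv]⟩

theorem maxGenEigenspace_toLin'_eq_span_singleton {A : Matrix n n K} {μ : K}
    (hμ : A.charpoly.rootMultiplicity μ = 1) {v : n → K} (hv0 : v ≠ 0) (hv : A *ᵥ v = μ • v) :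
    End.maxGenEigenspace (toLin' A) μ = K ∙ v :=
  eq_span_singleton_of_mem_of_finrank_eq_one (by rw [finrank_maxGenEigenspace_toLin', hμ])
    (mem_maxGenEigenspace_toLin'_of_mulVec_eq_smul hv) hv0

theorem ker_mulVecLin_eq_span_singleton {M : Matrix n n K}
    (hM : M.charpoly.rootMultiplicity 0 = 1) {w : n → K} (hw0 : w ≠ 0) (hw : M *ᵥ w = 0) :
    LinearMap.ker M.mulVecLin = K ∙ w := by
  have hgen := maxGenEigenspace_toLin'_eq_span_singleton hM hw0 (by rw [hw, zero_smul])
  refine le_antisymm (fun x hx ↦ hgen ▸ ?_) ((Submodule.span_singleton_le_iff_mem _ _).mpr hw)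
  exact mem_maxGenEigenspace_toLin'_of_mulVec_eq_smul (by simpa using hx)

theorem rootMultiplicity_charpoly_map {L : Type*} [Field L] (f : K →+* L) (M : Matrix n n K)
    (t : K) : (M.map f).charpoly.rootMultiplicity (f t) = M.charpoly.rootMultiplicity t := by
  rw [charpoly_map, ← eq_rootMultiplicity_map f.injective]

theorem mem_maxGenEigenspace_of_mem_maxGenEigenspace_kronecker_one {A : Matrix m m K} {μ : K}
    {x : m × n → K} (hx : x ∈ End.maxGenEigenspace (toLin' (A ⊗ₖ (1 : Matrix n n K))) μ)
    (j : n) : (fun i ↦ x (i, j)) ∈ End.maxGenEigenspace (toLin' A) μ :=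
  End.mapsTo_maxGenEigenspace_of_comp_eq (π := LinearMap.funLeft K K fun i ↦ (i, j))
    (LinearMap.ext fun y ↦ funext fun i ↦ kronecker_one_mulVec_apply A y i j) μ hx

theorem mem_maxGenEigenspace_of_mem_maxGenEigenspace_one_kronecker {B : Matrix n n K} {μ : K}
    {x : m × n → K} (hx : x ∈ End.maxGenEigenspace (toLin' ((1 : Matrix m m K) ⊗ₖ B)) μ)
    (i : m) : (fun j ↦ x (i, j)) ∈ End.maxGenEigenspace (toLin' B) μ :=
  End.mapsTo_maxGenEigenspace_of_comp_eq (π := LinearMap.funLeft K K fun j ↦ (i, j))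
    (LinearMap.ext fun y ↦ funext fun j ↦ one_kronecker_mulVec_apply B y i j) μ hx

theorem mem_roots_charpoly_of_maxGenEigenspace_kronecker_inf_ne_bot {A : Matrix m m K}
    {B : Matrix n n K} {μ ν : K}
    (h : End.maxGenEigenspace (toLin' (A ⊗ₖ (1 : Matrix n n K))) μ ⊓
      End.maxGenEigenspace (toLin' ((1 : Matrix m m K) ⊗ₖ B)) ν ≠ ⊥) :
    μ ∈ A.charpoly.roots ∧ ν ∈ B.charpoly.roots := by
  obtain ⟨x, ⟨hxA, hxB⟩, hx0⟩ := Submodule.exists_mem_ne_zero_of_ne_bot h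
  obtain ⟨⟨i, j⟩, hij⟩ : ∃ q, x q ≠ 0 := Function.ne_iff.mp hx0
  refine ⟨maxGenEigenspace_toLin'_ne_bot_iff.mp ?_, maxGenEigenspace_toLin'_ne_bot_iff.mp ?_⟩
  · exact (Submodule.ne_bot_iff _).mpr
      ⟨_, mem_maxGenEigenspace_of_mem_maxGenEigenspace_kronecker_one hxA j,
        Function.ne_iff.mpr ⟨i, hij⟩⟩
  · exact (Submodule.ne_bot_iff _).mpr
      ⟨_, mem_maxGenEigenspace_of_mem_maxGenEigenspace_one_kronecker hxB i,
        Function.ne_iff.mpr ⟨j, hij⟩⟩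

theorem maxGenEigenspace_kronecker_inf_eq_span_singleton {A : Matrix m m K} {B : Matrix n n K}
    {μ ν : K} (hμ : A.charpoly.rootMultiplicity μ = 1) (hν : B.charpoly.rootMultiplicity ν = 1)
    {v : m → K} {w : n → K} (hv0 : v ≠ 0) (hv : A *ᵥ v = μ • v) (hw0 : w ≠ 0)
    (hw : B *ᵥ w = ν • w) :
    End.maxGenEigenspace (toLin' (A ⊗ₖ (1 : Matrix n n K))) μ ⊓
      End.maxGenEigenspace (toLin' ((1 : Matrix m m K) ⊗ₖ B)) ν =
        K ∙ (fun q ↦ v q.1 * w q.2) := by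
  refine le_antisymm (fun x ⟨hxA, hxB⟩ ↦ mem_span_singleton_of_forall_slices
    (fun j ↦ maxGenEigenspace_toLin'_eq_span_singleton hμ hv0 hv ▸
      mem_maxGenEigenspace_of_mem_maxGenEigenspace_kronecker_one hxA j)
    (fun i ↦ maxGenEigenspace_toLin'_eq_span_singleton hν hw0 hw ▸
      mem_maxGenEigenspace_of_mem_maxGenEigenspace_one_kronecker hxB i)) ?_
  rw [Submodule.span_singleton_le_iff_mem]
  refine ⟨mem_maxGenEigenspace_toLin'_of_mulVec_eq_smul ?_,
    mem_maxGenEigenspace_toLin'_of_mulVec_eq_smul ?_⟩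
  · rw [kronecker_mulVec_kronecker, hv, one_mulVec]
    ext q
    simp [mul_assoc]
  · rw [kronecker_mulVec_kronecker, hw, one_mulVec]
    ext q
    simp [mul_left_comm]

theorem toLin'_bilinKronecker (A : Matrix m m K) (B : Matrix n n K) (c g b e : K) :
    toLin' (bilinKronecker A B c g b e) = c • 1 + g • toLin' (A ⊗ₖ (1 : Matrix n n K)) +
      b • toLin' ((1 : Matrix m m K) ⊗ₖ B) +
      e • (toLin' (A ⊗ₖ (1 : Matrix n n K)) * toLin' ((1 : Matrix m m K) ⊗ₖ B)) := by
  have hAB : A ⊗ₖ B = A ⊗ₖ (1 : Matrix n n K) * (1 : Matrix m m K) ⊗ₖ B := by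
    rw [← mul_kronecker_mul, Matrix.mul_one, Matrix.one_mul]
  simp [bilinKronecker, hAB, toLin'_mul, Module.End.mul_eq_comp, Module.End.one_eq_id]

variable [IsAlgClosed K]

theorem maxGenEigenspace_bilinKronecker (A : Matrix m m K) (B : Matrix n n K) (c g b e η : K) :
    End.maxGenEigenspace (toLin' (bilinKronecker A B c g b e)) η =
      ⨆ μ, ⨆ ν, ⨆ (_ : c + g * μ + b * ν + e * (μ * ν) = η),
        End.maxGenEigenspace (toLin' (A ⊗ₖ (1 : Matrix n n K))) μ ⊓
          End.maxGenEigenspace (toLin' ((1 : Matrix m m K) ⊗ₖ B)) ν := by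
  have hPQ := (commute_kronecker_one_one_kronecker A B).map (toLinAlgEquiv' (R := K))
  rw [toLin'_bilinKronecker]
  exact End.maxGenEigenspace_eq_iSup_inf hPQ
    (Commute.smul_one_add_smul_add_smul_add_smul_mul (Commute.refl _) hPQ.symm c g b e)
    (Commute.smul_one_add_smul_add_smul_add_smul_mul hPQ (Commute.refl _) c g b e)
    (End.maxGenEigenspace_inf_le_bilinear hPQ c g b e) η

theorem exists_eq_of_mem_roots_charpoly_bilinKronecker {A : Matrix m m K} {B : Matrix n n K}
    {c g b e η : K} (hη : η ∈ (bilinKronecker A B c g b e).charpoly.roots) :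
    ∃ μ ∈ A.charpoly.roots, ∃ ν ∈ B.charpoly.roots, c + g * μ + b * ν + e * (μ * ν) = η := by
  by_contra! h
  refine maxGenEigenspace_toLin'_ne_bot_iff.mpr hη ?_
  rw [maxGenEigenspace_bilinKronecker, eq_bot_iff]
  refine iSup_le fun μ ↦ iSup_le fun ν ↦ iSup_le fun hφ ↦ le_bot_iff.mpr ?_
  by_contra hS
  obtain ⟨hμ, hν⟩ := mem_roots_charpoly_of_maxGenEigenspace_kronecker_inf_ne_bot hS
  exact h μ hμ ν hν hφ

theorem rootMultiplicity_charpoly_bilinKronecker {A : Matrix m m K} {B : Matrix n n K}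
    {c g b e μ ν : K} (hμ : A.charpoly.rootMultiplicity μ = 1)
    (hν : B.charpoly.rootMultiplicity ν = 1)
    (huniq : ∀ μ' ∈ A.charpoly.roots, ∀ ν' ∈ B.charpoly.roots,
      c + g * μ' + b * ν' + e * (μ' * ν') = c + g * μ + b * ν + e * (μ * ν) → μ' = μ ∧ ν' = ν) :
    (bilinKronecker A B c g b e).charpoly.rootMultiplicity (c + g * μ + b * ν + e * (μ * ν)) =
      1 := by
  obtain ⟨v, hv0, hv⟩ := exists_mulVec_eq_smul_of_isRoot_charpoly
    (rootMultiplicity_pos'.mp (hμ ▸ Nat.one_pos)).2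
  obtain ⟨w, hw0, hw⟩ := exists_mulVec_eq_smul_of_isRoot_charpoly
    (rootMultiplicity_pos'.mp (hν ▸ Nat.one_pos)).2
  set S := fun μ' ν' ↦ End.maxGenEigenspace (toLin' (A ⊗ₖ (1 : Matrix n n K))) μ' ⊓
    End.maxGenEigenspace (toLin' ((1 : Matrix m m K) ⊗ₖ B)) ν'
  have hsingle : ⨆ μ', ⨆ ν', ⨆ (_ : c + g * μ' + b * ν' + e * (μ' * ν') =
      c + g * μ + b * ν + e * (μ * ν)), S μ' ν' = S μ ν := by
    refine le_antisymm (iSup_le fun μ' ↦ iSup_le fun ν' ↦ iSup_le fun hφ ↦ ?_)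
      (le_iSup_of_le μ (le_iSup_of_le ν (le_iSup_of_le rfl le_rfl)))
    by_cases hS : S μ' ν' = ⊥
    · exact hS ▸ bot_le
    obtain ⟨hμ', hν'⟩ := mem_roots_charpoly_of_maxGenEigenspace_kronecker_inf_ne_bot hS
    obtain ⟨rfl, rfl⟩ := huniq μ' hμ' ν' hν' hφ
    exact le_rfl
  have hspan : S μ ν = K ∙ (fun q ↦ v q.1 * w q.2) :=
    maxGenEigenspace_kronecker_inf_eq_span_singleton hμ hν hv0 hv hw0 hw
  rw [← finrank_maxGenEigenspace_toLin', maxGenEigenspace_bilinKronecker, hsingle, hspan,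
    finrank_span_singleton (mul_fst_snd_ne_zero hv0 hw0)]

end Field

end Matrix

theorem Complex.re_bilinear_ofReal (c g b e : ℝ) (z w : ℂ) :
    ((c : ℂ) + g * z + b * w + e * (z * w)).re = c + g * z.re + b * w.re + e * (z * w).re := by
  simp only [Complex.add_re, Complex.re_ofReal_mul, Complex.ofReal_re]

section RealMatrix

variable {m n : Type*} [DecidableEq m] [DecidableEq n]

theorem map_ofReal_bilinKronecker (A : Matrix m m ℝ) (B : Matrix n n ℝ) (c g b e : ℝ) :
    (bilinKronecker A B c g b e).map Complex.ofReal =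
      bilinKronecker (A.map Complex.ofReal) (B.map Complex.ofReal) c g b e :=
  map_bilinKronecker Complex.ofRealHom A B c g b e

variable [Fintype m] [Fintype n]

theorem exists_mulVec_eq_smul_of_ofReal_mem_spectrumM {A : Matrix n n ℝ} {t : ℝ}
    (h : (t : ℂ) ∈ spectrumM A) : ∃ v : n → ℝ, v ≠ 0 ∧ A *ᵥ v = t • v := by
  rw [spectrumM, mem_roots (charpoly_monic _).ne_zero] at h
  exact exists_mulVec_eq_smul_of_isRoot_charpoly
    ((isRoot_map_iff (f := Complex.ofRealHom) Complex.ofReal_injective).mp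
      (by rwa [← charpoly_map]))

variable {A : Matrix m m ℝ} {B : Matrix n n ℝ} {c g b e lam mu : ℝ}

theorem rootMultiplicity_charpoly_map_ofReal_bilinKronecker
    (hlam : rootMultiplicity (lam : ℂ) (A.map Complex.ofReal).charpoly = 1)
    (hmu : rootMultiplicity (mu : ℂ) (B.map Complex.ofReal).charpoly = 1)
    (hcrit : c + g * lam + b * mu + e * (lam * mu) = 0)
    (hneg : ∀ z ∈ spectrumM A, ∀ w ∈ spectrumM B, (z, w) ≠ ((lam : ℂ), (mu : ℂ)) →
      c + g * z.re + b * w.re + e * (z * w).re < 0) :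
    rootMultiplicity (0 : ℂ) ((bilinKronecker A B c g b e).map Complex.ofReal).charpoly = 1 := by
  have hcritC : (c : ℂ) + g * lam + b * mu + e * (lam * mu) = 0 := by exact_mod_cast hcrit
  rw [map_ofReal_bilinKronecker, ← hcritC]
  refine rootMultiplicity_charpoly_bilinKronecker hlam hmu fun z hz w hw heq ↦ ?_
  by_contra hne
  have hlt := hneg z hz w hw fun h ↦ hne (Prod.mk.inj h)
  rw [← Complex.re_bilinear_ofReal] at hlt
  rw [heq, hcritC, Complex.zero_re] at hlt
  exact lt_irrefl 0 hlt

theorem re_neg_of_mem_spectrumM_bilinKronecker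
    (hcrit : c + g * lam + b * mu + e * (lam * mu) = 0)
    (hneg : ∀ z ∈ spectrumM A, ∀ w ∈ spectrumM B, (z, w) ≠ ((lam : ℂ), (mu : ℂ)) →
      c + g * z.re + b * w.re + e * (z * w).re < 0)
    {η : ℂ} (hη : η ∈ spectrumM (bilinKronecker A B c g b e)) (hη0 : η ≠ 0) : η.re < 0 := by
  rw [spectrumM, map_ofReal_bilinKronecker] at hη
  obtain ⟨z, hz, w, hw, rfl⟩ := exists_eq_of_mem_roots_charpoly_bilinKronecker hη
  rw [Complex.re_bilinear_ofReal]
  refine hneg z hz w hw fun h ↦ hη0 ?_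
  obtain ⟨rfl, rfl⟩ := Prod.mk.inj h
  exact_mod_cast hcrit

theorem ker_mulVecLin_bilinKronecker
    (hmult : rootMultiplicity (0 : ℂ)
      ((bilinKronecker A B c g b e).map Complex.ofReal).charpoly = 1)
    {va : m → ℝ} {vo : n → ℝ} (hva0 : va ≠ 0) (hva : A *ᵥ va = lam • va) (hvo0 : vo ≠ 0)
    (hvo : B *ᵥ vo = mu • vo) (hcrit : c + g * lam + b * mu + e * (lam * mu) = 0) :
    LinearMap.ker (bilinKronecker A B c g b e).mulVecLin = ℝ ∙ (fun q ↦ va q.1 * vo q.2) := by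
  refine ker_mulVecLin_eq_span_singleton ?_ (mul_fst_snd_ne_zero hva0 hvo0) ?_
  · rw [← rootMultiplicity_charpoly_map Complex.ofRealHom, map_zero]
    exact hmult
  · rw [bilinKronecker_mulVec hva hvo, hcrit, zero_smul]

end RealMatrix

theorem stmt14_general {Na No : ℕ} (Aa : Matrix (Fin Na) (Fin Na) ℝ)
    (Ao : Matrix (Fin No) (Fin No) ℝ) (d α β γ δ lam mu K₀ ustar : ℝ)
    (hd : 0 < d)
    (hlam : ((lam : ℂ)) ∈ spectrumM Aa)
    (hlams : Polynomial.rootMultiplicity ((lam : ℂ))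
      ((Aa.map Complex.ofReal).charpoly) = 1)
    (hmu : ((mu : ℂ)) ∈ spectrumM Ao)
    (hmus : Polynomial.rootMultiplicity ((mu : ℂ))
      ((Ao.map Complex.ofReal).charpoly) = 1)
    (hK₀def : K₀ = α + γ * lam + β * mu + δ * lam * mu)
    (hK₀ : 0 < K₀)
    (hdom : ∀ lam' ∈ spectrumM Aa, ∀ mu' ∈ spectrumM Ao,
      (lam', mu') ≠ (((lam : ℂ)), ((mu : ℂ))) →
      α + γ * lam'.re + β * mu'.re + δ * (lam' * mu').re < K₀)
    (hust : ustar = d / K₀) :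
    (0 : ℂ) ∈ spectrumM (Jmat Aa Ao d ustar α β γ δ) ∧
    Polynomial.rootMultiplicity (0 : ℂ)
      (((Jmat Aa Ao d ustar α β γ δ).map Complex.ofReal).charpoly) = 1 ∧
    (∃ va : Fin Na → ℝ, ∃ vo : Fin No → ℝ, va ≠ 0 ∧ vo ≠ 0 ∧
      Aa.mulVec va = lam • va ∧ Ao.mulVec vo = mu • vo ∧
      LinearMap.ker (Jmat Aa Ao d ustar α β γ δ).mulVecLin =
        Submodule.span ℝ {(fun p => va p.1 * vo p.2 : Fin Na × Fin No → ℝ)}) ∧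
    (∀ η ∈ spectrumM (Jmat Aa Ao d ustar α β γ δ), η ≠ 0 → η.re < 0) := by
  have hu : 0 < ustar := hust ▸ div_pos hd hK₀
  have huK : ustar * K₀ = d := by rw [hust, div_mul_cancel₀ d hK₀.ne']
  have hcrit : -d + ustar * α + ustar * γ * lam + ustar * β * mu + ustar * δ * (lam * mu) = 0 := by
    rw [hK₀def] at huK
    linear_combination huK
  have hneg : ∀ z ∈ spectrumM Aa, ∀ w ∈ spectrumM Ao, (z, w) ≠ ((lam : ℂ), (mu : ℂ)) →
      -d + ustar * α + ustar * γ * z.re + ustar * β * w.re + ustar * δ * (z * w).re < 0 :=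
    fun z hz w hw hne ↦ by nlinarith [mul_lt_mul_of_pos_left (hdom z hz w hw hne) hu]
  have hmult := rootMultiplicity_charpoly_map_ofReal_bilinKronecker hlams hmus hcrit hneg
  obtain ⟨va, hva0, hva⟩ := exists_mulVec_eq_smul_of_ofReal_mem_spectrumM hlam
  obtain ⟨vo, hvo0, hvo⟩ := exists_mulVec_eq_smul_of_ofReal_mem_spectrumM hmu
  exact ⟨mem_roots'.mpr (rootMultiplicity_pos'.mp (hmult ▸ one_pos)), hmult,
    ⟨va, vo, hva0, hvo0, hva, hvo, ker_mulVecLin_bilinKronecker hmult hva0 hva hvo0 hvo hcrit⟩,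
    fun η hη hη0 ↦ re_neg_of_mem_spectrumM_bilinKronecker hcrit hneg hη hη0⟩

theorem stmt14 {Na No : ℕ} (Aa : Matrix (Fin Na) (Fin Na) ℝ)
    (Ao : Matrix (Fin No) (Fin No) ℝ) (d α β γ δ lam mu K₀ ustar : ℝ)
    (hd : 0 < d) (hα : 0 ≤ α) (hβ : 0 ≤ β) (hγ : 0 ≤ γ) (hδ : 0 ≤ δ)
    (hlam : ((lam : ℂ)) ∈ spectrumM Aa)
    (hlams : Polynomial.rootMultiplicity ((lam : ℂ))
      ((Aa.map Complex.ofReal).charpoly) = 1)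
    (hmu : ((mu : ℂ)) ∈ spectrumM Ao)
    (hmus : Polynomial.rootMultiplicity ((mu : ℂ))
      ((Ao.map Complex.ofReal).charpoly) = 1)
    (hK₀def : K₀ = α + γ * lam + β * mu + δ * lam * mu)
    (hK₀ : 0 < K₀)
    (hdom : ∀ lam' ∈ spectrumM Aa, ∀ mu' ∈ spectrumM Ao,
      (lam', mu') ≠ (((lam : ℂ)), ((mu : ℂ))) →
      α + γ * lam'.re + β * mu'.re + δ * (lam' * mu').re < K₀)
    (hust : ustar = d / K₀) :
    (0 : ℂ) ∈ spectrumM (Jmat Aa Ao d ustar α β γ δ) ∧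
    Polynomial.rootMultiplicity (0 : ℂ)
      (((Jmat Aa Ao d ustar α β γ δ).map Complex.ofReal).charpoly) = 1 ∧
    (∃ va : Fin Na → ℝ, ∃ vo : Fin No → ℝ, va ≠ 0 ∧ vo ≠ 0 ∧
      Aa.mulVec va = lam • va ∧ Ao.mulVec vo = mu • vo ∧
      LinearMap.ker (Jmat Aa Ao d ustar α β γ δ).mulVecLin =
        Submodule.span ℝ {(fun p => va p.1 * vo p.2 : Fin Na × Fin No → ℝ)}) ∧
    (∀ η ∈ spectrumM (Jmat Aa Ao d ustar α β γ δ), η ≠ 0 → η.re < 0) :=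
  stmt14_general Aa Ao d α β γ δ lam mu K₀ ustar hd hlam hlams hmu hmus hK₀def hK₀ hdom hust
end

section
/- Let A_a be a real N_a×N_a matrix, A_o a real N_o×N_o matrix, d > 0, α, β, γ, δ ≥ 0. Suppose λ ∈ σ(A_a) and μ ∈ σ(A_o) are simple eigenvalues satisfying: ξ := α + γ Re λ + β Re μ + δ Re(λμ) > 0; ω := γ Im λ + β Im μ + δ Im(λμ) ≠ 0; and for every pair (λ',μ') ∈ σ(A_a)×σ(A_o) not equal to (λ,μ) or (conj λ, conj μ), one has α + γ Re λ' + β Re μ' + δ Re(λ'μ') < ξ. Let u* := d/ξ and J(u) := (−d + uα) I_{N_aN_o} + uγ (A_a ⊗ I_{N_o}) + uβ (I_{N_a} ⊗ A_o) + uδ (A_a ⊗ A_o). Then the eigenvalues of J(u*) with zero real part are exactly the simple purely imaginary conjugate pair ±i u* ω, every other eigenvalue of J(u*) has strictly negative real part, and the eigenvalue branch η(u) = −d + u(α + γλ + βμ + δλμ) of J(u) satisfies Re η(u*) = 0 with d(Re η)/du = ξ > 0. -/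
open Matrix Polynomial

/-! The Jacobian is the Kronecker polynomial `c₀ + c₁ (A_a ⊗ 1) + c₂ (1 ⊗ A_o) + c₃ (A_a ⊗ A_o)`.
Triangularising `A_a = P T P⁻¹` and `A_o = Q S Q⁻¹` and conjugating by `P ⊗ Q` turns it into
`c₀ + c₁ (T ⊗ 1) + c₂ (1 ⊗ S) + c₃ (T ⊗ S)`, which is upper triangular for the lexicographic
order on index pairs. Hence its eigenvalues, with multiplicity, are
`-d + u (α + γ λ' + β μ' + δ λ' μ')` over all pairs `(λ', μ') ∈ σ(A_a) × σ(A_o)`. At `u = u*`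
the real part of the eigenvalue of a pair is `u* (Re(α + γ λ' + β μ' + δ λ' μ') - ξ)`, so the
dominance hypothesis makes every pair other than `(λ, μ)` and its conjugate stable, while these
two give `± i u* ω`; each occurs once because `λ`, `μ` (and so their conjugates, the
characteristic polynomials being real) are simple. -/

namespace Multiset

variable {α β : Type*}

theorem map_product_map {γ δ : Type*} (s : Multiset α) (t : Multiset β) (f : α → γ)
    (g : β → δ) : s.map f ×ˢ t.map g = (s ×ˢ t).map (Prod.map f g) := by
  induction s using Multiset.induction with
  | empty => simp
  | cons a s ih => simp [ih, map_map]

theorem count_product [DecidableEq α] [DecidableEq β] (s : Multiset α) (t : Multiset β) (a : α)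
    (b : β) : (s ×ˢ t).count (a, b) = s.count a * t.count b := by
  induction s using Multiset.induction with
  | empty => simp
  | cons x s ih =>
    rw [cons_product, count_add, ih, count_cons]
    by_cases hx : x = a
    · subst hx
      rw [count_map_eq_count' _ _ (Prod.mk_right_injective x), if_pos rfl]
      ring
    · rw [count_eq_zero_of_notMem (by simp [hx]), if_neg (Ne.symm hx), zero_add, add_zero]

theorem count_map_eq_count_of_fiber [DecidableEq α] [DecidableEq β] {s : Multiset α}
    {f : α → β} {a : α} (h : ∀ x ∈ s, f x = f a → x = a) : (s.map f).count (f a) = s.count a := by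
  rw [count_map, count_eq_card_filter_eq]
  congr 1
  exact filter_congr fun x hx => ⟨fun hfx => (h x hx hfx.symm).symm, fun hax => hax ▸ rfl⟩

end Multiset

namespace Module.Basis

variable {K V : Type*} [Field K] [AddCommGroup V] [Module K V] {n : ℕ} {N : Submodule K V}
  (b : Basis (Fin n) K N) (y : V) (hli : ∀ (c : K), ∀ x ∈ N, c • y + x = 0 → c = 0)
  (hsp : ∀ z : V, ∃ c : K, z + c • y ∈ N)

theorem mkFinSnoc_repr_coe_castSucc (x : N) (i : Fin n) :
    (mkFinSnoc b y hli hsp).repr x i.castSucc = b.repr x i := by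
  have : (mkFinSnoc b y hli hsp).coord i.castSucc ∘ₗ N.subtype = b.coord i :=
    b.ext fun j => by
      have hj : ((b j : N) : V) = mkFinSnoc b y hli hsp j.castSucc := by simp
      rw [LinearMap.comp_apply, Submodule.subtype_apply, hj]
      simp only [Basis.coord_apply, Basis.repr_self, Finsupp.single_apply, Fin.castSucc_inj]
  exact LinearMap.congr_fun this x

theorem mkFinSnoc_repr_coe_last (x : N) : (mkFinSnoc b y hli hsp).repr x (Fin.last n) = 0 := by
  have : (mkFinSnoc b y hli hsp).coord (Fin.last n) ∘ₗ N.subtype = 0 :=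
    b.ext fun j => by
      have hj : ((b j : N) : V) = mkFinSnoc b y hli hsp j.castSucc := by simp
      rw [LinearMap.comp_apply, Submodule.subtype_apply, hj]
      simp only [Basis.coord_apply, Basis.repr_self, Finsupp.single_apply,
        Fin.castSucc_ne_last, if_false, LinearMap.zero_apply]
  exact LinearMap.congr_fun this x

end Module.Basis

namespace Module.End

variable {K : Type*} [Field K] [IsAlgClosed K]

theorem exists_dual_hasEigenvector {V : Type*} [AddCommGroup V] [Module K V]
    [FiniteDimensional K V] [Nontrivial V] (f : End K V) :
    ∃ (c : K) (φ : Dual K V), φ ≠ 0 ∧ ∀ x, φ (f x) = c * φ x := by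
  obtain ⟨c, hc⟩ := exists_eigenvalue f.dualMap
  obtain ⟨φ, hφ⟩ := hc.exists_hasEigenvector
  exact ⟨c, φ, hφ.2, fun x => by simpa using LinearMap.congr_fun hφ.apply_eq_smul x⟩

/-- The kernel of a dual eigenvector is an invariant hyperplane: triangularise `f` on it and
append one vector outside it. -/
theorem exists_basis_isUpperTriangular :
    ∀ (n : ℕ) {V : Type*} [AddCommGroup V] [Module K V] [FiniteDimensional K V] (f : End K V),
      finrank K V = n → ∃ b : Basis (Fin n) K V, (LinearMap.toMatrix b b f).IsUpperTriangular
  | 0, V, _, _, _, f, hV => ⟨(finBasis K V).reindex (finCongr hV), fun i => i.elim0⟩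
  | n + 1, V, _, _, _, f, hV => by
    have : Nontrivial V := Module.nontrivial_of_finrank_eq_succ hV
    obtain ⟨c, φ, hφ, hφf⟩ := exists_dual_hasEigenvector f
    obtain ⟨y, hy⟩ : ∃ y, φ y ≠ 0 := by simpa [DFunLike.ext_iff] using hφ
    have hN : ∀ x ∈ LinearMap.ker φ, f x ∈ LinearMap.ker φ := fun x hx => by
      rw [LinearMap.mem_ker, hφf, LinearMap.mem_ker.mp hx, mul_zero]
    obtain ⟨bN, hbN⟩ := exists_basis_isUpperTriangular n (f.restrict hN) (by
      have := Dual.finrank_ker_add_one_of_ne_zero hφ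
      omega)
    have hli : ∀ (a : K), ∀ x ∈ LinearMap.ker φ, a • y + x = 0 → a = 0 := fun a x hx h => by
      have h' := congrArg φ h
      rw [map_add, map_smul, LinearMap.mem_ker.mp hx, add_zero, map_zero, smul_eq_mul] at h'
      exact (mul_eq_zero.mp h').resolve_right hy
    have hsp : ∀ z : V, ∃ a : K, z + a • y ∈ LinearMap.ker φ := fun z =>
      ⟨-(φ z / φ y), by simp [hy]⟩
    refine ⟨Basis.mkFinSnoc bN y hli hsp, fun i j hji => ?_⟩
    rw [LinearMap.toMatrix_apply]
    induction j using Fin.lastCases with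
    | last => exact absurd hji (not_lt.mpr (Fin.le_last i))
    | cast j =>
      have hfj : f (Basis.mkFinSnoc bN y hli hsp j.castSucc) = (f.restrict hN (bN j) : V) := by
        simp [LinearMap.restrict_apply]
      rw [hfj]
      induction i using Fin.lastCases with
      | last => exact Basis.mkFinSnoc_repr_coe_last ..
      | cast i =>
        rw [Basis.mkFinSnoc_repr_coe_castSucc, ← LinearMap.toMatrix_apply]
        exact hbN (Fin.castSucc_lt_castSucc_iff.mp hji)

end Module.End

namespace Matrix

open Kronecker

theorem charpoly_mul_mul_of_mul_eq_one {K n : Type*} [Field K] [Fintype n] [DecidableEq n]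
    {P Q : Matrix n n K} (h : Q * P = 1) (A : Matrix n n K) :
    (Q * A * P).charpoly = A.charpoly := by
  rw [mul_assoc, charpoly_mul_comm, mul_assoc, mul_eq_one_comm.mp h, mul_one]

theorem exists_mul_mul_isUpperTriangular {K : Type*} [Field K] [IsAlgClosed K] {n : ℕ}
    (A : Matrix (Fin n) (Fin n) K) :
    ∃ P Q : Matrix (Fin n) (Fin n) K, Q * P = 1 ∧ (Q * A * P).IsUpperTriangular := by
  obtain ⟨b, hb⟩ :=
    Module.End.exists_basis_isUpperTriangular n (toLin' A) (Module.finrank_fin_fun K)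
  let e := Pi.basisFun K (Fin n)
  refine ⟨e.toMatrix b, b.toMatrix e, b.toMatrix_mul_toMatrix_flip e, ?_⟩
  rwa [← LinearMap.toMatrix'_toLin' A, ← LinearMap.toMatrix_eq_toMatrix',
    basis_toMatrix_mul_linearMap_toMatrix_mul_basis_toMatrix]

theorem BlockTriangular.kronecker_toLex {R m n : Type*} [MulZeroClass R] [LT m] [LT n]
    {A : Matrix m m R} {B : Matrix n n R} (hA : A.IsUpperTriangular) (hB : B.IsUpperTriangular) :
    (A ⊗ₖ B).BlockTriangular toLex := by
  rintro ⟨i, k⟩ ⟨j, l⟩ h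
  rcases Prod.Lex.toLex_lt_toLex.mp h with h | ⟨rfl, h⟩
  · simp [hA h]
  · simp [hB h]

theorem BlockTriangular.smul {R S m α : Type*} [Zero R] [SMulZeroClass S R] [LT α]
    {M : Matrix m m R} {b : m → α} (h : M.BlockTriangular b) (c : S) :
    (c • M).BlockTriangular b :=
  fun _ _ hij => by simp [h hij]

variable {R ι α : Type*} [CommRing R] [Fintype ι] [DecidableEq ι] [LinearOrder α] [Fintype α]
  [DecidableEq α]

theorem charpoly_eq_prod_of_blockTriangular {M : Matrix ι ι R} (e : ι ≃ α)
    (h : M.BlockTriangular e) : M.charpoly = ∏ i, (X - C (M i i)) := by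
  have hT : (reindex e e M).IsUpperTriangular := fun i j hij => h (by simpa using hij)
  rw [← charpoly_reindex e, charpoly_of_isUpperTriangular _ hT]
  exact Fintype.prod_equiv e.symm _ _ (fun a => by simp)

theorem roots_charpoly_of_blockTriangular [IsDomain R] {M : Matrix ι ι R} (e : ι ≃ α)
    (h : M.BlockTriangular e) : M.charpoly.roots = Finset.univ.val.map M.diag := by
  rw [charpoly_eq_prod_of_blockTriangular e h, Finset.prod_eq_multiset_prod,
    ← roots_multiset_prod_X_sub_C (Finset.univ.val.map M.diag), Multiset.map_map]
  rfl

theorem roots_charpoly_kronecker_affine {K : Type*} [Field K] [IsAlgClosed K] {m n : ℕ}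
    (A : Matrix (Fin m) (Fin m) K) (B : Matrix (Fin n) (Fin n) K) (c₀ c₁ c₂ c₃ : K) :
    (c₀ • (1 : Matrix (Fin m × Fin n) (Fin m × Fin n) K) + c₁ • (A ⊗ₖ 1) + c₂ • (1 ⊗ₖ B)
        + c₃ • (A ⊗ₖ B)).charpoly.roots
      = (A.charpoly.roots ×ˢ B.charpoly.roots).map
          fun p => c₀ + c₁ * p.1 + c₂ * p.2 + c₃ * (p.1 * p.2) := by
  obtain ⟨P, Q, hQP, hT⟩ := exists_mul_mul_isUpperTriangular A
  obtain ⟨P', Q', hQP', hS⟩ := exists_mul_mul_isUpperTriangular B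
  set T := Q * A * P
  set S := Q' * B * P'
  have hQP'' : (Q ⊗ₖ Q') * (P ⊗ₖ P') = 1 := by
    rw [← mul_kronecker_mul, hQP, hQP', one_kronecker_one]
  have hconj : (Q ⊗ₖ Q') * (c₀ • 1 + c₁ • (A ⊗ₖ 1) + c₂ • (1 ⊗ₖ B) + c₃ • (A ⊗ₖ B)) * (P ⊗ₖ P')
      = c₀ • 1 + c₁ • (T ⊗ₖ 1) + c₂ • (1 ⊗ₖ S) + c₃ • (T ⊗ₖ S) := by
    simp only [mul_add, add_mul, mul_smul_comm, smul_mul_assoc, mul_one, hQP'',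
      ← mul_kronecker_mul, hQP, hQP', T, S]
  have htri : (c₀ • 1 + c₁ • (T ⊗ₖ 1) + c₂ • (1 ⊗ₖ S) + c₃ • (T ⊗ₖ S)).BlockTriangular toLex :=
    (((blockTriangular_one.smul c₀).add ((hT.kronecker_toLex blockTriangular_one).smul c₁)).add
      ((blockTriangular_one.kronecker_toLex hS).smul c₂)).add ((hT.kronecker_toLex hS).smul c₃)
  rw [← charpoly_mul_mul_of_mul_eq_one hQP'', hconj, roots_charpoly_of_blockTriangular toLex htri,
    ← charpoly_mul_mul_of_mul_eq_one hQP A, ← charpoly_mul_mul_of_mul_eq_one hQP' B,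
    roots_charpoly_of_blockTriangular (Equiv.refl _) hT,
    roots_charpoly_of_blockTriangular (Equiv.refl _) hS, Multiset.map_product_map,
    Multiset.map_map, ← Finset.product_val, Finset.univ_product_univ]
  refine Multiset.map_congr rfl fun p _ => ?_
  simp

end Matrix

theorem Polynomial.rootMultiplicity_conj_map_ofReal (p : ℝ[X]) (z : ℂ) :
    (p.map Complex.ofRealHom).rootMultiplicity (starRingEnd ℂ z)
      = (p.map Complex.ofRealHom).rootMultiplicity z := by
  rw [eq_rootMultiplicity_map (starRingEnd ℂ).injective z, Polynomial.map_map]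
  congr 2
  exact RingHom.ext fun r => (Complex.conj_ofReal r).symm

theorem count_spectrumM_conj {m : Type*} [Fintype m] [DecidableEq m] (A : Matrix m m ℝ) (z : ℂ) :
    (spectrumM A).count (starRingEnd ℂ z) = (spectrumM A).count z := by
  simp only [spectrumM, count_roots]
  rw [show A.map Complex.ofReal = A.map Complex.ofRealHom from rfl, charpoly_map,
    rootMultiplicity_conj_map_ofReal]

/-- At the pair `(λ, μ)` this is the eigenvalue branch `η(u)`. -/
def modeEigenvalue (d u α β γ δ : ℝ) (p : ℂ × ℂ) : ℂ :=
  -d + u * (α + γ * p.1 + β * p.2 + δ * p.1 * p.2)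

section modeEigenvalue

variable (d u α β γ δ : ℝ)

theorem modeEigenvalue_re (p : ℂ × ℂ) : (modeEigenvalue d u α β γ δ p).re
    = -d + u * (α + γ * p.1.re + β * p.2.re + δ * (p.1 * p.2).re) := by
  simp [modeEigenvalue, mul_assoc]

theorem modeEigenvalue_im (p : ℂ × ℂ) : (modeEigenvalue d u α β γ δ p).im
    = u * (γ * p.1.im + β * p.2.im + δ * (p.1 * p.2).im) := by
  simp [modeEigenvalue, mul_assoc]

theorem modeEigenvalue_conj (z w : ℂ) :
    modeEigenvalue d u α β γ δ (starRingEnd ℂ z, starRingEnd ℂ w)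
      = starRingEnd ℂ (modeEigenvalue d u α β γ δ (z, w)) := by
  simp [modeEigenvalue]

theorem hasDerivAt_modeEigenvalue_re (p : ℂ × ℂ) :
    HasDerivAt (fun v => (modeEigenvalue d v α β γ δ p).re)
      (α + γ * p.1.re + β * p.2.re + δ * (p.1 * p.2).re) u := by
  simp only [modeEigenvalue_re]
  simpa using ((hasDerivAt_id u).mul_const _).const_add (-d)

end modeEigenvalue

open Kronecker in
theorem Jmat_map_ofReal {Na No : ℕ} (Aa : Matrix (Fin Na) (Fin Na) ℝ)
    (Ao : Matrix (Fin No) (Fin No) ℝ) (d u α β γ δ : ℝ) :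
    (Jmat Aa Ao d u α β γ δ).map Complex.ofReal
      = ((-d + u * α : ℝ) : ℂ) • 1 + ((u * γ : ℝ) : ℂ) • (Aa.map Complex.ofReal ⊗ₖ 1)
        + ((u * β : ℝ) : ℂ) • (1 ⊗ₖ Ao.map Complex.ofReal)
        + ((u * δ : ℝ) : ℂ) • (Aa.map Complex.ofReal ⊗ₖ Ao.map Complex.ofReal) := by
  ext ⟨i, k⟩ ⟨j, l⟩
  simp [Jmat, one_apply, apply_ite Complex.ofReal]

theorem spectrumM_Jmat {Na No : ℕ} (Aa : Matrix (Fin Na) (Fin Na) ℝ)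
    (Ao : Matrix (Fin No) (Fin No) ℝ) (d u α β γ δ : ℝ) :
    spectrumM (Jmat Aa Ao d u α β γ δ)
      = (spectrumM Aa ×ˢ spectrumM Ao).map (modeEigenvalue d u α β γ δ) := by
  rw [spectrumM, Jmat_map_ofReal, roots_charpoly_kronecker_affine]
  refine Multiset.map_congr rfl fun p _ => ?_
  simp only [modeEigenvalue]
  push_cast
  ring

section CriticalPair

variable {ι : Type*} {S : Multiset ι} {f : ι → ℂ} {p₁ p₂ : ι}

theorem eq_of_apply_eq_of_forall_re_neg (hS : ∀ p ∈ S, p = p₁ ∨ p = p₂ ∨ (f p).re < 0)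
    (h₁ : (f p₁).re = 0) (hne : f p₁ ≠ f p₂) :
    ∀ p ∈ S, f p = f p₁ → p = p₁ := by
  intro p hp h
  rcases hS p hp with rfl | rfl | hneg
  · rfl
  · exact absurd h.symm hne
  · rw [h, h₁] at hneg
    exact absurd hneg (lt_irrefl 0)

theorem eq_or_eq_of_re_eq_zero_of_forall_re_neg
    (hS : ∀ p ∈ S, p = p₁ ∨ p = p₂ ∨ (f p).re < 0) :
    ∀ x ∈ S.map f, x.re = 0 → x = f p₁ ∨ x = f p₂ := by
  intro x hx hx0
  obtain ⟨p, hp, rfl⟩ := Multiset.mem_map.mp hx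
  rcases hS p hp with rfl | rfl | hneg
  · exact Or.inl rfl
  · exact Or.inr rfl
  · exact absurd hx0 hneg.ne

theorem re_neg_of_re_ne_zero_of_forall_re_neg (hS : ∀ p ∈ S, p = p₁ ∨ p = p₂ ∨ (f p).re < 0)
    (h₁ : (f p₁).re = 0) (h₂ : (f p₂).re = 0) :
    ∀ x ∈ S.map f, x.re ≠ 0 → x.re < 0 := by
  intro x hx hx0
  obtain ⟨p, hp, rfl⟩ := Multiset.mem_map.mp hx
  rcases hS p hp with rfl | rfl | hneg
  · exact absurd h₁ hx0
  · exact absurd h₂ hx0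
  · exact hneg

end CriticalPair

theorem eq_or_eq_or_modeEigenvalue_re_neg {Na No : ℕ} {Aa : Matrix (Fin Na) (Fin Na) ℝ}
    {Ao : Matrix (Fin No) (Fin No) ℝ} {d u α β γ δ ξ : ℝ} {lam mu : ℂ} (hu : 0 < u)
    (huξ : u * ξ = d)
    (hdom : ∀ lam' ∈ spectrumM Aa, ∀ mu' ∈ spectrumM Ao,
      (lam', mu') ≠ (lam, mu) →
      (lam', mu') ≠ (starRingEnd ℂ lam, starRingEnd ℂ mu) →
      α + γ * lam'.re + β * mu'.re + δ * (lam' * mu').re < ξ) :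
    ∀ p ∈ spectrumM Aa ×ˢ spectrumM Ao, p = (lam, mu) ∨
      p = (starRingEnd ℂ lam, starRingEnd ℂ mu) ∨ (modeEigenvalue d u α β γ δ p).re < 0 := by
  rintro ⟨z, w⟩ hp
  by_cases h₁ : (z, w) = (lam, mu)
  · exact Or.inl h₁
  by_cases h₂ : (z, w) = (starRingEnd ℂ lam, starRingEnd ℂ mu)
  · exact Or.inr (Or.inl h₂)
  obtain ⟨hz, hw⟩ := Multiset.mem_product.mp hp
  have hlt := hdom z hz w hw h₁ h₂
  refine Or.inr (Or.inr ?_)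
  rw [modeEigenvalue_re, ← huξ]
  nlinarith

theorem modeEigenvalue_eq_I_mul {d u α β γ δ ξ ω : ℝ} {lam mu : ℂ} (huξ : u * ξ = d)
    (hξdef : ξ = α + γ * lam.re + β * mu.re + δ * (lam * mu).re)
    (hωdef : ω = γ * lam.im + β * mu.im + δ * (lam * mu).im) :
    modeEigenvalue d u α β γ δ (lam, mu) = Complex.I * (u * ω) := by
  apply Complex.ext
  · rw [modeEigenvalue_re, ← hξdef, huξ]
    simp
  · rw [modeEigenvalue_im, ← hωdef]
    simp

theorem count_spectrumM_Jmat_eq_one {Na No : ℕ} {Aa : Matrix (Fin Na) (Fin Na) ℝ}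
    {Ao : Matrix (Fin No) (Fin No) ℝ} {d u α β γ δ : ℝ} {z w : ℂ}
    (hz : (spectrumM Aa).count z = 1) (hw : (spectrumM Ao).count w = 1)
    (hfiber : ∀ p ∈ spectrumM Aa ×ˢ spectrumM Ao,
      modeEigenvalue d u α β γ δ p = modeEigenvalue d u α β γ δ (z, w) → p = (z, w)) :
    (spectrumM (Jmat Aa Ao d u α β γ δ)).count (modeEigenvalue d u α β γ δ (z, w)) = 1 := by
  rw [spectrumM_Jmat, Multiset.count_map_eq_count_of_fiber hfiber, Multiset.count_product, hz, hw]

theorem stmt15_general {Na No : ℕ} (Aa : Matrix (Fin Na) (Fin Na) ℝ)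
    (Ao : Matrix (Fin No) (Fin No) ℝ) (d α β γ δ ξ ω ustar : ℝ) (lam mu : ℂ)
    (hd : 0 < d)
    (hlams : Polynomial.rootMultiplicity lam ((Aa.map Complex.ofReal).charpoly) = 1)
    (hmus : Polynomial.rootMultiplicity mu ((Ao.map Complex.ofReal).charpoly) = 1)
    (hξdef : ξ = α + γ * lam.re + β * mu.re + δ * (lam * mu).re)
    (hξ : 0 < ξ)
    (hωdef : ω = γ * lam.im + β * mu.im + δ * (lam * mu).im)
    (hω : ω ≠ 0)
    (hdom : ∀ lam' ∈ spectrumM Aa, ∀ mu' ∈ spectrumM Ao,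
      (lam', mu') ≠ (lam, mu) →
      (lam', mu') ≠ (starRingEnd ℂ lam, starRingEnd ℂ mu) →
      α + γ * lam'.re + β * mu'.re + δ * (lam' * mu').re < ξ)
    (hust : ustar = d / ξ) :
    -- the purely imaginary eigenvalues are exactly the simple pair ± i u* ω
    Complex.I * (ustar * ω) ∈ spectrumM (Jmat Aa Ao d ustar α β γ δ) ∧
    Polynomial.rootMultiplicity (Complex.I * (ustar * ω))
      (((Jmat Aa Ao d ustar α β γ δ).map Complex.ofReal).charpoly) = 1 ∧
    -(Complex.I * (ustar * ω)) ∈ spectrumM (Jmat Aa Ao d ustar α β γ δ) ∧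
    Polynomial.rootMultiplicity (-(Complex.I * (ustar * ω)))
      (((Jmat Aa Ao d ustar α β γ δ).map Complex.ofReal).charpoly) = 1 ∧
    (∀ η ∈ spectrumM (Jmat Aa Ao d ustar α β γ δ), η.re = 0 →
      η = Complex.I * (ustar * ω) ∨ η = -(Complex.I * (ustar * ω))) ∧
    -- every other eigenvalue has strictly negative real part
    (∀ η ∈ spectrumM (Jmat Aa Ao d ustar α β γ δ), η.re ≠ 0 → η.re < 0) ∧
    -- the eigenvalue branch crosses the imaginary axis transversally at u*
    (-(d : ℂ) + (ustar : ℂ) * ((α : ℂ) + (γ : ℂ) * lam + (β : ℂ) * mu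
      + (δ : ℂ) * lam * mu)).re = 0 ∧
    HasDerivAt (fun u : ℝ => (-(d : ℂ) + (u : ℂ) * ((α : ℂ) + (γ : ℂ) * lam
      + (β : ℂ) * mu + (δ : ℂ) * lam * mu)).re) ξ ustar := by
  have hu : 0 < ustar := hust ▸ div_pos hd hξ
  have huξ : ustar * ξ = d := by rw [hust]; field_simp
  have hS := eq_or_eq_or_modeEigenvalue_re_neg hu huξ hdom
  have hη₁ := modeEigenvalue_eq_I_mul (α := α) (β := β) (γ := γ) (δ := δ) huξ hξdef hωdef
  have hη₂ : modeEigenvalue d ustar α β γ δ (starRingEnd ℂ lam, starRingEnd ℂ mu)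
      = -(Complex.I * (ustar * ω)) := by
    rw [modeEigenvalue_conj, hη₁]
    simp [← Complex.ofReal_mul]
  have hre₁ : (modeEigenvalue d ustar α β γ δ (lam, mu)).re = 0 := by simp [hη₁]
  have hre₂ : (modeEigenvalue d ustar α β γ δ (starRingEnd ℂ lam, starRingEnd ℂ mu)).re = 0 := by
    simp [hη₂]
  have hne : modeEigenvalue d ustar α β γ δ (lam, mu)
      ≠ modeEigenvalue d ustar α β γ δ (starRingEnd ℂ lam, starRingEnd ℂ mu) := by
    rw [hη₁, hη₂]
    exact self_ne_neg.mpr (mul_ne_zero Complex.I_ne_zero (mod_cast mul_ne_zero hu.ne' hω))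
  have hlam₁ : (spectrumM Aa).count lam = 1 := by rwa [spectrumM, count_roots]
  have hmu₁ : (spectrumM Ao).count mu = 1 := by rwa [spectrumM, count_roots]
  have hc₁ := hη₁ ▸ count_spectrumM_Jmat_eq_one hlam₁ hmu₁
    (eq_of_apply_eq_of_forall_re_neg hS hre₁ hne)
  have hc₂ := hη₂ ▸ count_spectrumM_Jmat_eq_one ((count_spectrumM_conj _ _).trans hlam₁)
    ((count_spectrumM_conj _ _).trans hmu₁)
    (eq_of_apply_eq_of_forall_re_neg (fun p hp => or_left_comm.mp (hS p hp)) hre₂ hne.symm)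
  refine ⟨Multiset.count_pos.mp (by omega), by rwa [← count_roots],
    Multiset.count_pos.mp (by omega), by rwa [← count_roots], ?_, ?_, hre₁, ?_⟩
  · rw [spectrumM_Jmat]
    simpa only [hη₁, hη₂] using eq_or_eq_of_re_eq_zero_of_forall_re_neg hS
  · rw [spectrumM_Jmat]
    exact re_neg_of_re_ne_zero_of_forall_re_neg hS hre₁ hre₂
  · rw [hξdef]
    exact hasDerivAt_modeEigenvalue_re d ustar α β γ δ (lam, mu)

theorem stmt15 {Na No : ℕ} (Aa : Matrix (Fin Na) (Fin Na) ℝ)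
    (Ao : Matrix (Fin No) (Fin No) ℝ) (d α β γ δ ξ ω ustar : ℝ) (lam mu : ℂ)
    (hd : 0 < d) (hα : 0 ≤ α) (hβ : 0 ≤ β) (hγ : 0 ≤ γ) (hδ : 0 ≤ δ)
    (hlam : lam ∈ spectrumM Aa)
    (hlams : Polynomial.rootMultiplicity lam ((Aa.map Complex.ofReal).charpoly) = 1)
    (hmu : mu ∈ spectrumM Ao)
    (hmus : Polynomial.rootMultiplicity mu ((Ao.map Complex.ofReal).charpoly) = 1)
    (hξdef : ξ = α + γ * lam.re + β * mu.re + δ * (lam * mu).re)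
    (hξ : 0 < ξ)
    (hωdef : ω = γ * lam.im + β * mu.im + δ * (lam * mu).im)
    (hω : ω ≠ 0)
    (hdom : ∀ lam' ∈ spectrumM Aa, ∀ mu' ∈ spectrumM Ao,
      (lam', mu') ≠ (lam, mu) →
      (lam', mu') ≠ (starRingEnd ℂ lam, starRingEnd ℂ mu) →
      α + γ * lam'.re + β * mu'.re + δ * (lam' * mu').re < ξ)
    (hust : ustar = d / ξ) :
    -- the purely imaginary eigenvalues are exactly the simple pair ± i u* ω
    Complex.I * (ustar * ω) ∈ spectrumM (Jmat Aa Ao d ustar α β γ δ) ∧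
    Polynomial.rootMultiplicity (Complex.I * (ustar * ω))
      (((Jmat Aa Ao d ustar α β γ δ).map Complex.ofReal).charpoly) = 1 ∧
    -(Complex.I * (ustar * ω)) ∈ spectrumM (Jmat Aa Ao d ustar α β γ δ) ∧
    Polynomial.rootMultiplicity (-(Complex.I * (ustar * ω)))
      (((Jmat Aa Ao d ustar α β γ δ).map Complex.ofReal).charpoly) = 1 ∧
    (∀ η ∈ spectrumM (Jmat Aa Ao d ustar α β γ δ), η.re = 0 →
      η = Complex.I * (ustar * ω) ∨ η = -(Complex.I * (ustar * ω))) ∧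
    -- every other eigenvalue has strictly negative real part
    (∀ η ∈ spectrumM (Jmat Aa Ao d ustar α β γ δ), η.re ≠ 0 → η.re < 0) ∧
    -- the eigenvalue branch crosses the imaginary axis transversally at u*
    (-(d : ℂ) + (ustar : ℂ) * ((α : ℂ) + (γ : ℂ) * lam + (β : ℂ) * mu
      + (δ : ℂ) * lam * mu)).re = 0 ∧
    HasDerivAt (fun u : ℝ => (-(d : ℂ) + (u : ℂ) * ((α : ℂ) + (γ : ℂ) * lam
      + (β : ℂ) * mu + (δ : ℂ) * lam * mu)).re) ξ ustar :=
  stmt15_general Aa Ao d α β γ δ ξ ω ustar lam mu hd hlams hmus hξdef hξ hωdef hω hdom hust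
end
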